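/- arXiv:1111.6316 — 9 statements merged into one kernel-verified Lean document; each statement's English description precedes it below -/
import Mathlib

section
/- Let n be a positive integer, A a unital associative ring and M a left A-module. If α: A → M is a map (not assumed additive) such that α(a + 1) = α(a) for all a ∈ A and aⁿ • α(a) = 0 for all a ∈ A, then α(a) = 0 for all a ∈ A. -/
/-! Since `X` and `X + 1` are coprime in `ℤ[X]`, so are their `n`-th powers; evaluating a Bézout
identity `u * X ^ n + v * (X + 1) ^ n = 1` at `a` writes `1` as a left combination of `a ^ n` and
`(a + 1) ^ n`, both of which kill `α a = α (a + 1)`. -/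

theorem exists_mul_pow_add_mul_add_one_pow_eq_one {A : Type*} [Ring A] (x : A) (n : ℕ) :
    ∃ u v : A, u * x ^ n + v * (x + 1) ^ n = 1 := by
  have hcop : IsCoprime (Polynomial.X : Polynomial ℤ) (Polynomial.X + 1) := ⟨-1, 1, by ring⟩
  obtain ⟨u, v, huv⟩ := hcop.pow (m := n) (n := n)
  refine ⟨Polynomial.aeval x u, Polynomial.aeval x v, ?_⟩
  simpa using congrArg (Polynomial.aeval x) huv

theorem eq_zero_of_pow_smul_eq_zero_of_add_one_pow_smul_eq_zero {A : Type*} [Ring A] {M : Type*}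
    [AddCommGroup M] [Module A M] {x : A} {m : M} {n : ℕ}
    (h₀ : x ^ n • m = 0) (h₁ : (x + 1) ^ n • m = 0) : m = 0 := by
  obtain ⟨u, v, huv⟩ := exists_mul_pow_add_mul_add_one_pow_eq_one x n
  calc m = (u * x ^ n + v * (x + 1) ^ n) • m := by rw [huv, one_smul]
    _ = 0 := by rw [add_smul, mul_smul, mul_smul, h₀, h₁, smul_zero, smul_zero, add_zero]

theorem kCommuting_lemma_left_general {A : Type*} [Ring A] {M : Type*} [AddCommGroup M] [Module A M]
    (n : ℕ) (α : A → M)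
    (hshift : ∀ a : A, α (a + 1) = α a)
    (hann : ∀ a : A, a ^ n • α a = 0) :
    ∀ a : A, α a = 0 := fun a =>
  eq_zero_of_pow_smul_eq_zero_of_add_one_pow_smul_eq_zero (hann a) (hshift a ▸ hann (a + 1))

/-- Let `n` be a positive integer, `A` a unital associative ring and `M` a
left `A`-module. If `α : A → M` is a map (not assumed additive) such that
`α (a + 1) = α a` and `a ^ n • α a = 0` for all `a ∈ A`, then `α = 0`. -/
theorem kCommuting_lemma_left {A : Type*} [Ring A] {M : Type*} [AddCommGroup M] [Module A M]
    (n : ℕ) (hn : 0 < n) (α : A → M)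
    (hshift : ∀ a : A, α (a + 1) = α a)
    (hann : ∀ a : A, a ^ n • α a = 0) :
    ∀ a : A, α a = 0 :=
  kCommuting_lemma_left_general n α hshift hann
end

section
/- Let n be a positive integer, A a unital associative ring and M′ a right A-module. If β: A → M′ is a map (not assumed additive) such that β(a + 1) = β(a) for all a ∈ A and β(a) • aⁿ = 0 for all a ∈ A, then β(a) = 0 for all a ∈ A. -/
/-! `X ^ n` and `(X + 1) ^ n` are coprime in `ℤ[X]`; evaluating a Bézout identity at `a` writes `1`
as a left combination of `a ^ n` and `(a + 1) ^ n`. Both kill `β a` (the second because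
`β (a + 1) = β a`), hence so does `1`. -/

open Polynomial

theorem eq_zero_of_aeval_smul_eq_zero_of_isCoprime {S R M : Type*} [CommSemiring S] [Semiring R]
    [Algebra S R] [AddCommMonoid M] [Module R M] {p q : S[X]} (hpq : IsCoprime p q) (r : R)
    {m : M} (hp : aeval r p • m = 0) (hq : aeval r q • m = 0) : m = 0 := by
  obtain ⟨u, v, huv⟩ := hpq
  have hone : aeval r u * aeval r p + aeval r v * aeval r q = 1 := by
    simpa only [map_add, map_mul, map_one] using congrArg (aeval r) huv
  calc m = (aeval r u * aeval r p + aeval r v * aeval r q) • m := by rw [hone, one_smul]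
    _ = 0 := by rw [add_smul, mul_smul, mul_smul, hp, hq, smul_zero, smul_zero, add_zero]

theorem isCoprime_X_pow_X_add_one_pow (S : Type*) [CommRing S] (n : ℕ) :
    IsCoprime ((X : S[X]) ^ n) ((X + 1) ^ n) :=
  IsCoprime.pow ⟨-1, 1, by ring⟩

theorem kCommuting_lemma_right_general {A : Type*} [Ring A] {M' : Type*} [AddCommGroup M']
    [Module Aᵐᵒᵖ M']
    (n : ℕ) (β : A → M')
    (hshift : ∀ a : A, β (a + 1) = β a)
    (hann : ∀ a : A, MulOpposite.op (a ^ n) • β a = 0) :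
    ∀ a : A, β a = 0 := by
  intro a
  refine eq_zero_of_aeval_smul_eq_zero_of_isCoprime (isCoprime_X_pow_X_add_one_pow ℤ n)
    (MulOpposite.op a) ?_ ?_
  · simpa only [map_pow, aeval_X, MulOpposite.op_pow] using hann a
  · simpa only [map_pow, map_add, aeval_X, map_one, MulOpposite.op_pow, MulOpposite.op_add,
      MulOpposite.op_one, hshift] using hann (a + 1)

/-- Let `n` be a positive integer, `A` a unital associative ring and `M'` a
right `A`-module. If `β : A → M'` is a map (not assumed additive) such that
`β (a + 1) = β a` and `β a • a ^ n = 0` for all `a ∈ A`, then `β = 0`.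
The right action of `A` on `M'` is encoded as a module structure over `Aᵐᵒᵖ`. -/
theorem kCommuting_lemma_right {A : Type*} [Ring A] {M' : Type*} [AddCommGroup M']
    [Module Aᵐᵒᵖ M']
    (n : ℕ) (hn : 0 < n) (β : A → M')
    (hshift : ∀ a : A, β (a + 1) = β a)
    (hann : ∀ a : A, MulOpposite.op (a ^ n) • β a = 0) :
    ∀ a : A, β a = 0 :=
  kCommuting_lemma_right_general n β hshift hann
end

section
/- If Θ: G → G is a k-commuting R-linear map, then eΘ(a)f = 0 and fΘ(a)e = 0 for all a ∈ A, eΘ(b)f = 0 and fΘ(b)e = 0 for all b ∈ B, fΘ(m)e = 0 for all m ∈ M, and eΘ(n)f = 0 for all n ∈ N; consequently eΘ(g)f = eΘ(egf)f and fΘ(g)e = fΘ(fge)e for every g ∈ G. -/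
/-- The iterated commutator: `iterComm 0 x y = x`, `iterComm (i+1) x y = [iterComm i x y, y]`. -/
def iterComm {G : Type*} [Ring G] : ℕ → G → G → G
  | 0, x, _ => x
  | i + 1, x, y => iterComm i x y * y - y * iterComm i x y

/-!
Write `f = 1 - e`. If `g * f = 0` and `g` commutes with `e`, then
`e * [x, g]_k * f = (-g)^k * (e * x * f)`, so for a `k`-commuting `Θ` the corner `e * Θ g * f` is
killed by `g^k` on the left; mirror formulas hold for `f * _ * e`. For `a ∈ eGe` take `g = e`,
`g = a` and `g = e + a`: since `e * Θ e * f = 0`, the element `Z = e * Θ a * f` is killed by `a^k`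
and by `(e + a)^k`, hence by `e^(2k) = ((e + a) - a)^(2k)`, which fixes `Z`. For `m ∈ eGf`,
`g = e + m` gives `f * [x, g]_k * e = f * x * e`. Exchanging `e` and `f` covers `B` and `N`, and
the Peirce decomposition of `g` gives the last claim.
-/

section IteratedCommutator

variable {G : Type*} [Ring G]

theorem mul_iterComm_mul_eq_mul_pow {u v g c : G} (hug : u * g = 0) (hgv : g * v = v * c)
    (x : G) (i : ℕ) : u * iterComm i x g * v = u * x * v * c ^ i := by
  induction i with
  | zero => simp [iterComm]
  | succ i ih =>
    calc u * iterComm (i + 1) x g * v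
        = u * iterComm i x g * (g * v) - u * g * iterComm i x g * v := by
          simp only [iterComm]; noncomm_ring
      _ = u * x * v * c ^ (i + 1) := by
          rw [hgv, hug, ← mul_assoc, ih, zero_mul, zero_mul, sub_zero, mul_assoc, ← pow_succ]

theorem mul_iterComm_mul_eq_neg_pow_mul {u v g c : G} (hgv : g * v = 0) (hug : u * g = c * u)
    (x : G) (i : ℕ) : u * iterComm i x g * v = (-c) ^ i * (u * x * v) := by
  induction i with
  | zero => simp [iterComm]
  | succ i ih =>
    calc u * iterComm (i + 1) x g * v
        = u * iterComm i x g * (g * v) - u * g * iterComm i x g * v := by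
          simp only [iterComm]; noncomm_ring
      _ = (-c) ^ (i + 1) * (u * x * v) := by
          rw [hgv, hug, mul_zero, zero_sub, mul_assoc c, mul_assoc c, ih, pow_succ', mul_assoc (-c),
            neg_mul]

theorem neg_pow_mul_eq_zero_iff {a z : G} {k : ℕ} : (-a) ^ k * z = 0 ↔ a ^ k * z = 0 := by
  rw [neg_pow, mul_assoc, (isUnit_neg_one.pow k).mul_right_eq_zero]

theorem pow_mul_mul_mul_eq_zero_of_iterComm_eq_zero {u v g x : G} {k : ℕ}
    (hx : iterComm k x g = 0) (hgv : g * v = 0) (hug : u * g = g * u) :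
    g ^ k * (u * x * v) = 0 := by
  rw [← neg_pow_mul_eq_zero_iff, ← mul_iterComm_mul_eq_neg_pow_mul hgv hug, hx, mul_zero,
    zero_mul]

theorem mul_mul_mul_pow_eq_zero_of_iterComm_eq_zero {u v g x : G} {k : ℕ}
    (hx : iterComm k x g = 0) (hug : u * g = 0) (hgv : g * v = v * g) :
    u * x * v * g ^ k = 0 := by
  rw [← mul_iterComm_mul_eq_mul_pow hug hgv, hx, mul_zero, zero_mul]

end IteratedCommutator

section Annihilator

variable {G : Type*} [Ring G] {x y z : G} {k : ℕ}

theorem pow_mul_eq_self_of_mul_eq_self (h : x * z = z) (n : ℕ) : x ^ n * z = z := by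
  rw [← mul_left_iterate_apply]; exact Function.IsFixedPt.iterate (f := (x * ·)) h n

theorem mul_pow_eq_self_of_mul_eq_self (h : z * x = z) (n : ℕ) : z * x ^ n = z := by
  rw [← mul_right_iterate_apply]; exact Function.IsFixedPt.iterate (f := (· * x)) h n

theorem Commute.eq_zero_of_pow_mul_eq_zero (hxy : Commute x y) (hxz : x * z = z)
    (hy : y ^ k * z = 0) (hsum : (x + y) ^ k * z = 0) : z = 0 := by
  set I : Ideal G := LinearMap.ker (LinearMap.toSpanSingleton G G z)
  have mem_I : ∀ w, w ∈ I ↔ w * z = 0 := fun w => by simp [I]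
  have hneg : (-y) ^ k ∈ I := by
    rw [neg_pow]; exact I.mul_mem_left _ ((mem_I _).2 hy)
  have hx := I.add_pow_mem_of_pow_mem_of_le_of_commute ((mem_I _).2 hsum) hneg
    (Nat.le_succ (k + k)) ((hxy.add_left (Commute.refl y)).neg_right)
  rwa [add_neg_cancel_right, mem_I, pow_mul_eq_self_of_mul_eq_self hxz] at hx

theorem Commute.eq_zero_of_mul_pow_eq_zero (hxy : Commute x y) (hzx : z * x = z)
    (hy : z * y ^ k = 0) (hsum : z * (x + y) ^ k = 0) : z = 0 := by
  apply MulOpposite.op_injective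
  refine hxy.op.eq_zero_of_pow_mul_eq_zero (k := k) ?_ ?_ ?_
  · rw [← MulOpposite.op_mul, hzx]
  · rw [← MulOpposite.op_pow, ← MulOpposite.op_mul, hy, MulOpposite.op_zero]
  · rw [← MulOpposite.op_add, ← MulOpposite.op_pow, ← MulOpposite.op_mul, hsum,
      MulOpposite.op_zero]

end Annihilator

namespace IsIdempotentElem

variable {G : Type*} [Ring G] {e : G} {F : Type*} [FunLike F G G] [AddMonoidHomClass F G G]
  {Θ : F} {k : ℕ}

theorem mul_mul_eq_mul_mul_mul_mul {p q : G} (hp : IsIdempotentElem p) (hq : IsIdempotentElem q)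
    (x : G) : p * x * q = p * (p * x * q) * q := by
  rw [← mul_assoc p (p * x) q, hp.mul_self_mul, hq.mul_mul_self]

theorem mul_map_mul_one_sub_eq_zero_of_diag (he : IsIdempotentElem e)
    (hΘ : ∀ g, iterComm k (Θ g) g = 0) {a : G} (ha : a = e * a * e) :
    e * Θ a * (1 - e) = 0 := by
  have hea : e * a = a := by rw [ha, ← mul_assoc, ← mul_assoc, he.eq]
  have hae : a * e = a := by rw [ha, mul_assoc, he.eq]
  have haf : a * (1 - e) = 0 := by rw [mul_sub, mul_one, hae, sub_self]
  have hcomm : Commute e a := hea.trans hae.symm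
  have hcorner : ∀ x, e * (e * x * (1 - e)) = e * x * (1 - e) := fun x => by
    rw [← mul_assoc, ← mul_assoc, he.eq]
  have h_e : e * Θ e * (1 - e) = 0 := by
    have h := pow_mul_mul_mul_eq_zero_of_iterComm_eq_zero (hΘ e) he.mul_one_sub_self rfl
    rwa [pow_mul_eq_self_of_mul_eq_self (hcorner _)] at h
  have h_a := pow_mul_mul_mul_eq_zero_of_iterComm_eq_zero (u := e) (hΘ a) haf hcomm
  have h_ea := pow_mul_mul_mul_eq_zero_of_iterComm_eq_zero (u := e) (hΘ (e + a))
    (by rw [add_mul, he.mul_one_sub_self, haf, add_zero]) ((Commute.refl e).add_right hcomm)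
  rw [map_add, mul_add e, add_mul _ _ (1 - e), h_e, zero_add] at h_ea
  exact hcomm.eq_zero_of_pow_mul_eq_zero (hcorner _) h_a h_ea

theorem one_sub_mul_map_mul_eq_zero_of_diag (he : IsIdempotentElem e)
    (hΘ : ∀ g, iterComm k (Θ g) g = 0) {a : G} (ha : a = e * a * e) :
    (1 - e) * Θ a * e = 0 := by
  have hea : e * a = a := by rw [ha, ← mul_assoc, ← mul_assoc, he.eq]
  have hae : a * e = a := by rw [ha, mul_assoc, he.eq]
  have hfa : (1 - e) * a = 0 := by rw [sub_mul, one_mul, hea, sub_self]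
  have hcomm : Commute e a := hea.trans hae.symm
  have h_e : (1 - e) * Θ e * e = 0 := by
    have h := mul_mul_mul_pow_eq_zero_of_iterComm_eq_zero (hΘ e) he.one_sub_mul_self rfl
    rwa [mul_pow_eq_self_of_mul_eq_self (he.mul_mul_self _)] at h
  have h_a := mul_mul_mul_pow_eq_zero_of_iterComm_eq_zero (v := e) (hΘ a) hfa hcomm.symm
  have h_ea := mul_mul_mul_pow_eq_zero_of_iterComm_eq_zero (v := e) (hΘ (e + a))
    (by rw [mul_add, he.one_sub_mul_self, hfa, add_zero]) ((Commute.refl e).add_right hcomm).symm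
  rw [map_add, mul_add (1 - e), add_mul _ _ e, h_e, zero_add] at h_ea
  exact hcomm.eq_zero_of_mul_pow_eq_zero (he.mul_mul_self _) h_a h_ea

theorem one_sub_mul_map_mul_eq_zero_of_offDiag (he : IsIdempotentElem e)
    (hΘ : ∀ g, iterComm k (Θ g) g = 0) {m : G} (hm : m = e * m * (1 - e)) :
    (1 - e) * Θ m * e = 0 := by
  have hfm : (1 - e) * m = 0 := by
    rw [hm, ← mul_assoc, ← mul_assoc, he.one_sub_mul_self, zero_mul, zero_mul]
  have hme : m * e = 0 := by rw [hm, mul_assoc, he.one_sub_mul_self, mul_zero]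
  have h := mul_iterComm_mul_eq_mul_pow (u := 1 - e) (v := e) (g := e + m) (c := 1)
    (by rw [mul_add, he.one_sub_mul_self, hfm, add_zero])
    (by rw [add_mul, he.eq, hme, add_zero, mul_one]) (Θ (e + m)) k
  rw [hΘ, mul_zero, zero_mul, one_pow, mul_one, map_add, mul_add (1 - e), add_mul _ _ e,
    one_sub_mul_map_mul_eq_zero_of_diag he hΘ (by rw [he.eq, he.eq]), zero_add] at h
  exact h.symm

end IsIdempotentElem

theorem offDiagonal_corners_of_kCommuting_general
    {R : Type*} [CommRing R] {G : Type*} [Ring G] [Algebra R G]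
    (e : G) (he : e * e = e) (f : G) (hf : f = 1 - e)
    (k : ℕ)
    (Θ : G →ₗ[R] G) (hΘ : ∀ g : G, iterComm k (Θ g) g = 0) :
    (∀ a : G, a = e * a * e → e * Θ a * f = 0 ∧ f * Θ a * e = 0) ∧
    (∀ b : G, b = f * b * f → e * Θ b * f = 0 ∧ f * Θ b * e = 0) ∧
    (∀ m : G, m = e * m * f → f * Θ m * e = 0) ∧
    (∀ n : G, n = f * n * e → e * Θ n * f = 0) ∧
    (∀ g : G, e * Θ g * f = e * Θ (e * g * f) * f ∧ f * Θ g * e = f * Θ (f * g * e) * e) := by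
  have he' : IsIdempotentElem e := he
  have hf' : IsIdempotentElem f := hf ▸ he'.one_sub
  have he_eq : e = 1 - f := by rw [hf, sub_sub_cancel]
  have hA : ∀ a : G, a = e * a * e → e * Θ a * f = 0 ∧ f * Θ a * e = 0 := fun a ha =>
    hf ▸ ⟨he'.mul_map_mul_one_sub_eq_zero_of_diag hΘ ha,
      he'.one_sub_mul_map_mul_eq_zero_of_diag hΘ ha⟩
  have hB : ∀ b : G, b = f * b * f → e * Θ b * f = 0 ∧ f * Θ b * e = 0 := fun b hb =>
    he_eq ▸ ⟨hf'.one_sub_mul_map_mul_eq_zero_of_diag hΘ hb,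
      hf'.mul_map_mul_one_sub_eq_zero_of_diag hΘ hb⟩
  have hM : ∀ m : G, m = e * m * f → f * Θ m * e = 0 := fun m hm =>
    hf ▸ he'.one_sub_mul_map_mul_eq_zero_of_offDiag hΘ (hf ▸ hm)
  have hN : ∀ n : G, n = f * n * e → e * Θ n * f = 0 := fun n hn =>
    he_eq ▸ hf'.one_sub_mul_map_mul_eq_zero_of_offDiag hΘ (he_eq ▸ hn)
  refine ⟨hA, hB, hM, hN, fun g => ?_⟩
  have hΘg : Θ g = Θ (e * g * e) + Θ (e * g * f) + Θ (f * g * e) + Θ (f * g * f) := by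
    rw [← map_add, ← map_add, ← map_add, hf]; congr 1; noncomm_ring
  have hA' := hA _ (he'.mul_mul_eq_mul_mul_mul_mul he' g)
  have hB' := hB _ (hf'.mul_mul_eq_mul_mul_mul_mul hf' g)
  constructor
  · simp only [hΘg, mul_add, add_mul, hA'.1, hB'.1, hN _ (hf'.mul_mul_eq_mul_mul_mul_mul he' g),
      zero_add, add_zero]
  · simp only [hΘg, mul_add, add_mul, hA'.2, hB'.2, hM _ (he'.mul_mul_eq_mul_mul_mul_mul hf' g),
      zero_add, add_zero]

/-- off-diagonal corners of a k-commuting map vanish on diagonal inputs, etc. -/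
theorem offDiagonal_corners_of_kCommuting
    {R : Type*} [CommRing R] {G : Type*} [Ring G] [Algebra R G]
    (e : G) (he : e * e = e) (f : G) (hf : f = 1 - e)
    (hMN : (∃ m : G, m = e * m * f ∧ m ≠ 0) ∨ (∃ n : G, n = f * n * e ∧ n ≠ 0))
    (hMfaithL : ∀ a : G, a = e * a * e → (∀ m : G, m = e * m * f → a * m = 0) → a = 0)
    (hMfaithR : ∀ b : G, b = f * b * f → (∀ m : G, m = e * m * f → m * b = 0) → b = 0)
    (k : ℕ) (hk : 2 ≤ k)
    (Θ : G →ₗ[R] G) (hΘ : ∀ g : G, iterComm k (Θ g) g = 0) :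
    (∀ a : G, a = e * a * e → e * Θ a * f = 0 ∧ f * Θ a * e = 0) ∧
    (∀ b : G, b = f * b * f → e * Θ b * f = 0 ∧ f * Θ b * e = 0) ∧
    (∀ m : G, m = e * m * f → f * Θ m * e = 0) ∧
    (∀ n : G, n = f * n * e → e * Θ n * f = 0) ∧
    (∀ g : G, e * Θ g * f = e * Θ (e * g * f) * f ∧ f * Θ g * e = f * Θ (f * g * e) * e) :=
  offDiagonal_corners_of_kCommuting_general e he f hf k Θ hΘ
end

section
/- If Θ: G → G is a k-commuting R-linear map, then the map δ1: A → A, a ↦ eΘ(a)e, is a k-commuting map of A (that is, [δ1(a), a]_k = 0 for all a ∈ A) and δ1(e) ∈ Z(A)_k; likewise the map μ4: B → B, b ↦ fΘ(b)f, is a k-commuting map of B and μ4(f) ∈ Z(B)_k. -/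
/-!
Compressing by `e` commutes with taking commutators against any `a ∈ eGe`, so
`[eΘ(a)e, a]_k = e[Θ(a), a]_k e = 0`. For `δ1(e)`, apply this to `e + x` with `x ∈ eGe`:
since `e` is central in `eGe`, adding it to the second argument does not change an iterated
commutator, and additivity of `Θ` leaves `[δ1(e), x]_k = [δ1(e + x), e + x]_k - [δ1(x), x]_k = 0`.
-/

section IterComm

variable {G : Type*} [Ring G]

theorem iterComm_add_left (i : ℕ) (p q x : G) :
    iterComm i (p + q) x = iterComm i p x + iterComm i q x := by
  induction i with
  | zero => rfl
  | succ i ih => simp only [iterComm, ih]; noncomm_ring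

theorem iterComm_mul_mul_of_commute {p q a : G} (hp : Commute p a) (hq : Commute q a)
    (z : G) (i : ℕ) : iterComm i (p * z * q) a = p * iterComm i z a * q := by
  induction i with
  | zero => rfl
  | succ i ih =>
    set w := iterComm i z a
    have hright : p * w * q * a = p * (w * a) * q := by
      rw [mul_assoc (p * w), hq.eq, ← mul_assoc, mul_assoc p w a]
    have hleft : a * (p * w * q) = p * (a * w) * q := by
      rw [← mul_assoc, ← mul_assoc, ← hp.eq, mul_assoc p a w]
    rw [iterComm, iterComm, ih, hright, hleft, ← sub_mul, ← mul_sub]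

theorem Commute.iterComm {c p x : G} (hp : Commute c p) (hx : Commute c x) (i : ℕ) :
    Commute c (iterComm i p x) := by
  induction i with
  | zero => exact hp
  | succ i ih => exact (ih.mul_right hx).sub_right (hx.mul_right ih)

theorem iterComm_add_right_of_commute {c p x : G} (hp : Commute c p) (hx : Commute c x)
    (i : ℕ) : iterComm i p (c + x) = iterComm i p x := by
  induction i with
  | zero => rfl
  | succ i ih =>
    have hc := (hp.iterComm hx i).eq
    simp only [iterComm, ih, mul_add, add_mul, hc]
    abel

end IterComm

section Corner

variable {G : Type*} [Ring G] {e : G}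

theorem IsIdempotentElem.commute_of_eq_mul_mul (he : IsIdempotentElem e) {a : G}
    (ha : a = e * a * e) : Commute e a := by
  have hea : e * a = a := by rw [ha, ← mul_assoc, ← mul_assoc, he.eq]
  have hae : a * e = a := by rw [ha, mul_assoc, he.eq]
  exact hea.trans hae.symm

theorem IsIdempotentElem.iterComm_compress_eq_zero (he : IsIdempotentElem e) {k : ℕ}
    (Θ : G → G) (hΘ : ∀ g : G, iterComm k (Θ g) g = 0) {a : G} (ha : a = e * a * e) :
    iterComm k (e * Θ a * e) a = 0 := by
  have hea := he.commute_of_eq_mul_mul ha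
  rw [iterComm_mul_mul_of_commute hea hea, hΘ, mul_zero, zero_mul]

theorem IsIdempotentElem.iterComm_compress_apply_eq_zero (he : IsIdempotentElem e) {k : ℕ}
    (Θ : G →+ G) (hΘ : ∀ g : G, iterComm k (Θ g) g = 0) {x : G} (hx : x = e * x * e) :
    iterComm k (e * Θ e * e) x = 0 := by
  have hex : e + x = e * (e + x) * e := by rw [mul_add, add_mul, he.eq, he.eq, ← hx]
  have hcomm : Commute e (e * Θ (e + x) * e) :=
    he.commute_of_eq_mul_mul (by simp only [← mul_assoc, he.eq]; rw [mul_assoc _ e e, he.eq])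
  have hsum := he.iterComm_compress_eq_zero Θ hΘ hex
  rw [iterComm_add_right_of_commute hcomm (he.commute_of_eq_mul_mul hx), map_add, mul_add,
    add_mul, iterComm_add_left, he.iterComm_compress_eq_zero Θ hΘ hx, add_zero] at hsum
  exact hsum

end Corner

theorem diagonal_compressions_kCommuting_general
    {R : Type*} [CommRing R] {G : Type*} [Ring G] [Algebra R G]
    (e : G) (he : e * e = e) (f : G) (hf : f = 1 - e)
    (k : ℕ)
    (Θ : G →ₗ[R] G) (hΘ : ∀ g : G, iterComm k (Θ g) g = 0) :
    (∀ a : G, a = e * a * e → iterComm k (e * Θ a * e) a = 0) ∧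
    (∀ x : G, x = e * x * e → iterComm k (e * Θ e * e) x = 0) ∧
    (∀ b : G, b = f * b * f → iterComm k (f * Θ b * f) b = 0) ∧
    (∀ y : G, y = f * y * f → iterComm k (f * Θ f * f) y = 0) := by
  have he' : IsIdempotentElem e := he
  have hf' : IsIdempotentElem f := hf ▸ he'.one_sub
  exact ⟨fun _ => he'.iterComm_compress_eq_zero Θ hΘ,
    fun _ => he'.iterComm_compress_apply_eq_zero Θ.toAddMonoidHom hΘ,
    fun _ => hf'.iterComm_compress_eq_zero Θ hΘ,
    fun _ => hf'.iterComm_compress_apply_eq_zero Θ.toAddMonoidHom hΘ⟩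

/-- the diagonal compressions `δ1 : a ↦ eΘ(a)e` and `μ4 : b ↦ fΘ(b)f` of a
k-commuting map are k-commuting maps of `A = eGe` and `B = fGf` respectively, with
`δ1(e) ∈ Z(A)_k` and `μ4(f) ∈ Z(B)_k`. -/
theorem diagonal_compressions_kCommuting
    {R : Type*} [CommRing R] {G : Type*} [Ring G] [Algebra R G]
    (e : G) (he : e * e = e) (f : G) (hf : f = 1 - e)
    (hMN : (∃ m : G, m = e * m * f ∧ m ≠ 0) ∨ (∃ n : G, n = f * n * e ∧ n ≠ 0))
    (hMfaithL : ∀ a : G, a = e * a * e → (∀ m : G, m = e * m * f → a * m = 0) → a = 0)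
    (hMfaithR : ∀ b : G, b = f * b * f → (∀ m : G, m = e * m * f → m * b = 0) → b = 0)
    (k : ℕ) (hk : 2 ≤ k)
    (Θ : G →ₗ[R] G) (hΘ : ∀ g : G, iterComm k (Θ g) g = 0) :
    (∀ a : G, a = e * a * e → iterComm k (e * Θ a * e) a = 0) ∧
    (∀ x : G, x = e * x * e → iterComm k (e * Θ e * e) x = 0) ∧
    (∀ b : G, b = f * b * f → iterComm k (f * Θ b * f) b = 0) ∧
    (∀ y : G, y = f * y * f → iterComm k (f * Θ f * f) y = 0) :=
  diagonal_compressions_kCommuting_general e he f hf k Θ hΘ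
end

section
/- If Θ: G → G is a k-commuting R-linear map, then δ2(m) ∈ Z(A)_k and μ2(m) ∈ Z(B)_k for all m ∈ M, δ3(n) ∈ Z(A)_k and μ3(n) ∈ Z(B)_k for all n ∈ N, δ4(b) ∈ Z(A)_k for all b ∈ B, and μ1(a) ∈ Z(B)_k for all a ∈ A. -/
section Ring

variable {G : Type*} [Ring G]

theorem iterComm_succ (i : ℕ) (x y : G) :
    iterComm (i + 1) x y = iterComm i x y * y - y * iterComm i x y := rfl

theorem iterComm_sub (i : ℕ) (x x' y : G) :
    iterComm i (x - x') y = iterComm i x y - iterComm i x' y := by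
  induction i with
  | zero => rfl
  | succ i ih => simp only [iterComm_succ, ih]; noncomm_ring

open Polynomial in
theorem exists_pow_mul_add_one_sub_pow_mul_eq_one (x : G) (k : ℕ) :
    ∃ p q : G, x ^ k * p + (1 - x) ^ k * q = 1 ∧ p * x ^ k + q * (1 - x) ^ k = 1 := by
  obtain ⟨p, q, hpq⟩ : IsCoprime ((X : ℤ[X]) ^ k) ((1 - X) ^ k) :=
    IsCoprime.pow ⟨1, 1, by ring⟩
  have hpq' : X ^ k * p + (1 - X) ^ k * q = 1 := by linear_combination hpq
  refine ⟨aeval x p, aeval x q, ?_, ?_⟩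
  · simpa using congr_arg (aeval x) hpq'
  · simpa using congr_arg (aeval x) hpq

theorem eq_zero_of_mul_pow_eq_zero_of_mul_one_sub_pow_eq_zero {u x : G} {k : ℕ}
    (h₁ : u * x ^ k = 0) (h₂ : u * (1 - x) ^ k = 0) : u = 0 := by
  obtain ⟨p, q, hpq, -⟩ := exists_pow_mul_add_one_sub_pow_mul_eq_one x k
  calc u = u * (x ^ k * p + (1 - x) ^ k * q) := by rw [hpq, mul_one]
    _ = 0 := by rw [mul_add, ← mul_assoc, ← mul_assoc, h₁, h₂, zero_mul, zero_mul, add_zero]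

theorem eq_zero_of_pow_mul_eq_zero_of_one_sub_pow_mul_eq_zero {u x : G} {k : ℕ}
    (h₁ : x ^ k * u = 0) (h₂ : (1 - x) ^ k * u = 0) : u = 0 := by
  obtain ⟨p, q, -, hpq⟩ := exists_pow_mul_add_one_sub_pow_mul_eq_one x k
  calc u = (p * x ^ k + q * (1 - x) ^ k) * u := by rw [hpq, one_mul]
    _ = 0 := by rw [add_mul, mul_assoc, mul_assoc, h₁, h₂, mul_zero, mul_zero, add_zero]

theorem pow_mul_eq_zero_of_neg_pow_mul_eq_zero {u x : G} {k : ℕ} (h : (-x) ^ k * u = 0) :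
    x ^ k * u = 0 := by
  rwa [neg_pow, mul_assoc, (isUnit_neg_one.pow k).mul_right_eq_zero] at h

theorem mul_eq_zero_of_eq_mul_mul_left {x l r l' : G} (hx : x = l * x * r) (h : l' * l = 0) :
    l' * x = 0 := by
  rw [hx, ← mul_assoc, ← mul_assoc, h, zero_mul, zero_mul]

theorem mul_eq_zero_of_eq_mul_mul_right {x l r r' : G} (hx : x = l * x * r) (h : r * r' = 0) :
    x * r' = 0 := by
  rw [hx, mul_assoc, mul_assoc, h, mul_zero, mul_zero]

theorem mul_eq_self_of_eq_mul_mul_left {x l r : G} (hl : IsIdempotentElem l)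
    (hx : x = l * x * r) : l * x = x := by
  rw [hx, ← mul_assoc, ← mul_assoc, hl.eq]

theorem mul_eq_self_of_eq_mul_mul_right {x l r : G} (hr : IsIdempotentElem r)
    (hx : x = l * x * r) : x * r = x := by
  rw [hx, hr.mul_mul_self]

theorem mul_pow_eq_self_of_mul_eq_self_s4 {u e : G} (hu : u * e = u) (k : ℕ) : u * e ^ k = u := by
  rw [← mul_right_iterate_apply]
  exact Function.iterate_fixed hu k

theorem pow_mul_eq_self_of_mul_eq_self_s4 {u e : G} (hu : e * u = u) (k : ℕ) : e ^ k * u = u := by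
  rw [← mul_left_iterate_apply]
  exact Function.iterate_fixed hu k

theorem mul_sub_pow_eq_mul_one_sub_pow {u x e : G} (he : IsIdempotentElem e) (hu : u * e = u)
    (hx : x = e * x * e) (k : ℕ) : u * (e - x) ^ k = u * (1 - x) ^ k := by
  have hex := mul_eq_self_of_eq_mul_mul_left he hx
  have hxe := mul_eq_self_of_eq_mul_mul_right he hx
  have hcomm : Commute e (1 - x) := by
    simp only [Commute, SemiconjBy, mul_sub, sub_mul, mul_one, one_mul, hex, hxe]
  rw [show e - x = e * (1 - x) by rw [mul_sub, mul_one, hex], hcomm.mul_pow, ← mul_assoc,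
    mul_pow_eq_self_of_mul_eq_self_s4 hu]

theorem sub_pow_mul_eq_one_sub_pow_mul {u x e : G} (he : IsIdempotentElem e) (hu : e * u = u)
    (hx : x = e * x * e) (k : ℕ) : (e - x) ^ k * u = (1 - x) ^ k * u := by
  have hex := mul_eq_self_of_eq_mul_mul_left he hx
  have hxe := mul_eq_self_of_eq_mul_mul_right he hx
  have hcomm : Commute (1 - x) e := by
    simp only [Commute, SemiconjBy, mul_sub, sub_mul, mul_one, one_mul, hex, hxe]
  rw [show e - x = (1 - x) * e by rw [sub_mul, one_mul, hxe], hcomm.mul_pow, mul_assoc,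
    pow_mul_eq_self_of_mul_eq_self_s4 hu]

theorem mul_mul_eq_mul_mul_mul_mul {l r : G} (hl : IsIdempotentElem l) (hr : IsIdempotentElem r)
    (x : G) : l * x * r = l * (l * x * r) * r := by
  simp only [mul_assoc, hl.mul_self_mul, hr.eq]

end Ring

section Peirce

variable {G : Type*} [Ring G] {e f : G}

theorem IsIdempotentElem.mul_eq_zero_of_add_eq_one (he : IsIdempotentElem e) (hef : e + f = 1) :
    e * f = 0 := by
  rw [eq_sub_of_add_eq' hef, he.mul_one_sub_self]

theorem IsIdempotentElem.mul_eq_zero_of_add_eq_one' (hf : IsIdempotentElem f) (hef : e + f = 1) :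
    f * e = 0 :=
  hf.mul_eq_zero_of_add_eq_one ((add_comm f e).trans hef)

theorem peirce_decomposition (hef : e + f = 1) (g : G) :
    g = e * g * e + e * g * f + f * g * e + f * g * f := by
  calc g = (e + f) * g * (e + f) := by rw [hef, one_mul, mul_one]
    _ = _ := by noncomm_ring

variable {g : G}

theorem fe_corner_commutator (he : IsIdempotentElem e) (hf : IsIdempotentElem f)
    (hef : e + f = 1) (hg : f * g * e = 0) (w : G) :
    f * (w * g - g * w) * e = f * w * e * (e * g * e) - f * g * f * (f * w * e) := by
  linear_combination (norm := noncomm_ring) f * w * hg - hg * w * e - f * w * hef * g * e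
    + f * g * hef * w * e - f * w * he.eq * g * e + f * g * hf.eq * w * e

theorem ee_corner_commutator (he : IsIdempotentElem e) (hf : IsIdempotentElem f)
    (hef : e + f = 1) (hg : f * g * e = 0) (w : G) :
    e * (w * g - g * w) * e =
      e * w * e * (e * g * e) - e * g * e * (e * w * e) - e * g * f * (f * w * e) := by
  linear_combination (norm := noncomm_ring) e * w * hg - e * w * hef * g * e
    + e * g * hef * w * e - e * w * he.eq * g * e + e * g * he.eq * w * e + e * g * hf.eq * w * e

theorem ff_corner_commutator (he : IsIdempotentElem e) (hf : IsIdempotentElem f)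
    (hef : e + f = 1) (hg : f * g * e = 0) (w : G) :
    f * (w * g - g * w) * f =
      f * w * f * (f * g * f) - f * g * f * (f * w * f) + f * w * e * (e * g * f) := by
  linear_combination (norm := noncomm_ring) -hg * w * f - f * w * hef * g * f
    + f * g * hef * w * f - f * w * hf.eq * g * f + f * g * hf.eq * w * f - f * w * he.eq * g * f

end Peirce

section Iterate

variable {G : Type*} [Ring G] {e f g : G}

theorem fe_corner_iterComm (he : IsIdempotentElem e) (hf : IsIdempotentElem f)
    (hef : e + f = 1) (hg : f * g * e = 0) (z : G) (i : ℕ) :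
    f * iterComm i z g * e = (fun u => u * (e * g * e) - f * g * f * u)^[i] (f * z * e) := by
  induction i with
  | zero => rfl
  | succ i ih =>
    rw [iterComm_succ, Function.iterate_succ_apply', ← ih, fe_corner_commutator he hf hef hg]

theorem fe_corner_iterComm_eq_zero (he : IsIdempotentElem e) (hf : IsIdempotentElem f)
    (hef : e + f = 1) (hg : f * g * e = 0) {z : G} (hz : f * z * e = 0) (i : ℕ) :
    f * iterComm i z g * e = 0 := by
  rw [fe_corner_iterComm he hf hef hg, hz]
  exact Function.iterate_fixed (by simp) i

theorem ee_corner_iterComm (he : IsIdempotentElem e) (hf : IsIdempotentElem f)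
    (hef : e + f = 1) (hg : f * g * e = 0) {z : G} (hz : f * z * e = 0) (i : ℕ) :
    e * iterComm i z g * e = iterComm i (e * z * e) (e * g * e) := by
  induction i with
  | zero => rfl
  | succ i ih =>
    rw [iterComm_succ, iterComm_succ, ee_corner_commutator he hf hef hg,
      fe_corner_iterComm_eq_zero he hf hef hg hz, ih, mul_zero, sub_zero]

theorem ff_corner_iterComm (he : IsIdempotentElem e) (hf : IsIdempotentElem f)
    (hef : e + f = 1) (hg : f * g * e = 0) {z : G} (hz : f * z * e = 0) (i : ℕ) :
    f * iterComm i z g * f = iterComm i (f * z * f) (f * g * f) := by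
  induction i with
  | zero => rfl
  | succ i ih =>
    rw [iterComm_succ, iterComm_succ, ff_corner_commutator he hf hef hg,
      fe_corner_iterComm_eq_zero he hf hef hg hz, ih, zero_mul, add_zero]

end Iterate

section Commuting

variable {G : Type*} [Ring G] {e f : G} {k : ℕ} {Θ : G →+ G}

theorem fe_corner_map_mul_pow_eq_zero (he : IsIdempotentElem e) (hf : IsIdempotentElem f)
    (hef : e + f = 1) (hΘ : ∀ g, iterComm k (Θ g) g = 0) {g : G} (hg : f * g * e = 0)
    (hgf : f * g * f = 0) : f * Θ g * e * (e * g * e) ^ k = 0 := by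
  have h := fe_corner_iterComm he hf hef hg (Θ g) k
  simp only [hΘ, hgf, zero_mul, sub_zero, mul_zero] at h
  rw [h, ← mul_right_iterate_apply]

theorem pow_mul_fe_corner_map_eq_zero (he : IsIdempotentElem e) (hf : IsIdempotentElem f)
    (hef : e + f = 1) (hΘ : ∀ g, iterComm k (Θ g) g = 0) {g : G} (hg : f * g * e = 0)
    (hge : e * g * e = 0) : (f * g * f) ^ k * (f * Θ g * e) = 0 := by
  have h := fe_corner_iterComm he hf hef hg (Θ g) k
  simp only [hΘ, hge, mul_zero, zero_sub, zero_mul] at h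
  apply pow_mul_eq_zero_of_neg_pow_mul_eq_zero
  rw [← mul_left_iterate_apply]
  simpa only [neg_mul] using h.symm

theorem fe_corner_map_ee_eq_zero (he : IsIdempotentElem e) (hf : IsIdempotentElem f)
    (hef : e + f = 1) (hΘ : ∀ g, iterComm k (Θ g) g = 0) {x : G} (hx : x = e * x * e) :
    f * Θ x * e = 0 := by
  have hfe : f * e = 0 := hf.mul_eq_zero_of_add_eq_one' hef
  have hpow : ∀ x', x' = e * x' * e → f * Θ x' * e * x' ^ k = 0 := by
    intro x' hx'
    have h := fe_corner_map_mul_pow_eq_zero he hf hef hΘ (g := x')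
      (by rw [mul_eq_zero_of_eq_mul_mul_left hx' hfe, zero_mul])
      (by rw [mul_eq_zero_of_eq_mul_mul_left hx' hfe, zero_mul])
    rwa [← hx'] at h
  have hΘe : f * Θ e * e = 0 := by
    have h := hpow e (by rw [he.eq, he.eq])
    rwa [mul_pow_eq_self_of_mul_eq_self_s4 (he.mul_mul_self _)] at h
  have hsub : f * Θ x * e * (e - x) ^ k = 0 := by
    have h := hpow (e - x) (by rw [mul_sub, sub_mul, he.eq, he.eq, ← hx])
    rwa [map_sub, mul_sub, sub_mul, hΘe, zero_sub, neg_mul, neg_eq_zero] at h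
  rw [mul_sub_pow_eq_mul_one_sub_pow he (he.mul_mul_self _) hx] at hsub
  exact eq_zero_of_mul_pow_eq_zero_of_mul_one_sub_pow_eq_zero (hpow x hx) hsub

theorem fe_corner_map_ff_eq_zero (he : IsIdempotentElem e) (hf : IsIdempotentElem f)
    (hef : e + f = 1) (hΘ : ∀ g, iterComm k (Θ g) g = 0) {y : G} (hy : y = f * y * f) :
    f * Θ y * e = 0 := by
  have hfe : f * e = 0 := hf.mul_eq_zero_of_add_eq_one' hef
  have hef' : e * f = 0 := he.mul_eq_zero_of_add_eq_one hef
  have hpow : ∀ y', y' = f * y' * f → y' ^ k * (f * Θ y' * e) = 0 := by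
    intro y' hy'
    have h := pow_mul_fe_corner_map_eq_zero he hf hef hΘ (g := y')
      (by rw [mul_assoc, mul_eq_zero_of_eq_mul_mul_right hy' hfe, mul_zero])
      (by rw [mul_eq_zero_of_eq_mul_mul_left hy' hef', zero_mul])
    rwa [← hy'] at h
  have hfu : ∀ t, f * (f * t * e) = f * t * e := fun t => by
    simp only [mul_assoc, hf.mul_self_mul]
  have hΘf : f * Θ f * e = 0 := by
    have h := hpow f (by rw [hf.eq, hf.eq])
    rwa [pow_mul_eq_self_of_mul_eq_self_s4 (hfu _)] at h
  have hsub : (f - y) ^ k * (f * Θ y * e) = 0 := by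
    have h := hpow (f - y) (by rw [mul_sub, sub_mul, hf.eq, hf.eq, ← hy])
    rwa [map_sub, mul_sub, sub_mul, hΘf, zero_sub, mul_neg, neg_eq_zero] at h
  rw [sub_pow_mul_eq_one_sub_pow_mul hf (hfu _) hy] at hsub
  exact eq_zero_of_pow_mul_eq_zero_of_one_sub_pow_mul_eq_zero (hpow y hy) hsub

theorem fe_corner_map_ef_eq_zero (he : IsIdempotentElem e) (hf : IsIdempotentElem f)
    (hef : e + f = 1) (hΘ : ∀ g, iterComm k (Θ g) g = 0) {m : G} (hm : m = e * m * f) :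
    f * Θ m * e = 0 := by
  have hfe : f * e = 0 := hf.mul_eq_zero_of_add_eq_one' hef
  have hem : e * m = m := mul_eq_self_of_eq_mul_mul_left he hm
  have hfm : f * m = 0 := mul_eq_zero_of_eq_mul_mul_left hm hfe
  have hme : m * e = 0 := mul_eq_zero_of_eq_mul_mul_right hm hfe
  have h := fe_corner_map_mul_pow_eq_zero he hf hef hΘ (g := e + m)
    (by rw [mul_add, add_mul, hfe, hfm, zero_mul, add_zero])
    (by rw [mul_add, add_mul, hfe, hfm, zero_mul, add_zero])
  rw [mul_add, add_mul, he.eq, he.eq, hem, hme, add_zero,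
    mul_pow_eq_self_of_mul_eq_self_s4 (he.mul_mul_self _), map_add, mul_add, add_mul,
    fe_corner_map_ee_eq_zero he hf hef hΘ (by rw [he.eq, he.eq]), zero_add] at h
  exact h

theorem fe_corner_map_eq_zero (he : IsIdempotentElem e) (hf : IsIdempotentElem f)
    (hef : e + f = 1) (hΘ : ∀ g, iterComm k (Θ g) g = 0) {g : G} (hg : f * g * e = 0) :
    f * Θ g * e = 0 := by
  rw [peirce_decomposition hef g, hg, add_zero, map_add, map_add, mul_add, mul_add, add_mul,
    add_mul, fe_corner_map_ee_eq_zero he hf hef hΘ (mul_mul_eq_mul_mul_mul_mul he he g),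
    fe_corner_map_ef_eq_zero he hf hef hΘ (mul_mul_eq_mul_mul_mul_mul he hf g),
    fe_corner_map_ff_eq_zero he hf hef hΘ (mul_mul_eq_mul_mul_mul_mul hf hf g), add_zero, add_zero]

theorem iterComm_ee_corner_map_eq_zero (he : IsIdempotentElem e) (hf : IsIdempotentElem f)
    (hef : e + f = 1) (hΘ : ∀ g, iterComm k (Θ g) g = 0) {g : G} (hg : f * g * e = 0) :
    iterComm k (e * Θ g * e) (e * g * e) = 0 := by
  rw [← ee_corner_iterComm he hf hef hg (fe_corner_map_eq_zero he hf hef hΘ hg), hΘ, mul_zero,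
    zero_mul]

theorem iterComm_ff_corner_map_eq_zero (he : IsIdempotentElem e) (hf : IsIdempotentElem f)
    (hef : e + f = 1) (hΘ : ∀ g, iterComm k (Θ g) g = 0) {g : G} (hg : f * g * e = 0) :
    iterComm k (f * Θ g * f) (f * g * f) = 0 := by
  rw [← ff_corner_iterComm he hf hef hg (fe_corner_map_eq_zero he hf hef hΘ hg), hΘ, mul_zero,
    zero_mul]

theorem iterComm_ee_corner_map_eq_zero_of_mul_eq_zero (he : IsIdempotentElem e)
    (hf : IsIdempotentElem f) (hef : e + f = 1) (hΘ : ∀ g, iterComm k (Θ g) g = 0) {x t : G}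
    (hx : x = e * x * e) (ht : t * e = 0) : iterComm k (e * Θ t * e) x = 0 := by
  have hfx : f * x = 0 :=
    mul_eq_zero_of_eq_mul_mul_left hx (hf.mul_eq_zero_of_add_eq_one' hef)
  have h₁ := iterComm_ee_corner_map_eq_zero he hf hef hΘ (g := x + t)
    (by rw [mul_add, add_mul, hfx, zero_mul, mul_assoc, ht, mul_zero, add_zero])
  have h₂ := iterComm_ee_corner_map_eq_zero he hf hef hΘ (g := x) (by rw [hfx, zero_mul])
  rw [mul_add, add_mul, ← hx, mul_assoc e t, ht, mul_zero, add_zero] at h₁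
  rw [← hx] at h₂
  rw [← add_sub_cancel_left x t, map_sub, mul_sub, sub_mul, iterComm_sub, h₁, h₂, sub_zero]

theorem iterComm_ff_corner_map_eq_zero_of_mul_eq_zero (he : IsIdempotentElem e)
    (hf : IsIdempotentElem f) (hef : e + f = 1) (hΘ : ∀ g, iterComm k (Θ g) g = 0) {y t : G}
    (hy : y = f * y * f) (ht : f * t = 0) : iterComm k (f * Θ t * f) y = 0 := by
  have hye : y * e = 0 :=
    mul_eq_zero_of_eq_mul_mul_right hy (hf.mul_eq_zero_of_add_eq_one' hef)
  have h₁ := iterComm_ff_corner_map_eq_zero he hf hef hΘ (g := y + t)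
    (by rw [mul_add, add_mul, ht, zero_mul, mul_assoc, hye, mul_zero, add_zero])
  have h₂ :=
    iterComm_ff_corner_map_eq_zero he hf hef hΘ (g := y) (by rw [mul_assoc, hye, mul_zero])
  rw [mul_add, add_mul, ← hy, ht, zero_mul, add_zero] at h₁
  rw [← hy] at h₂
  rw [← add_sub_cancel_left y t, map_sub, mul_sub, sub_mul, iterComm_sub, h₁, h₂, sub_zero]

end Commuting

theorem corner_compressions_central_general
    {R : Type*} [CommRing R] {G : Type*} [Ring G] [Algebra R G]
    (e : G) (he : e * e = e) (f : G) (hf : f = 1 - e)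
    (k : ℕ)
    (Θ : G →ₗ[R] G) (hΘ : ∀ g : G, iterComm k (Θ g) g = 0) :
    (∀ m : G, m = e * m * f →
      (∀ x : G, x = e * x * e → iterComm k (e * Θ m * e) x = 0) ∧
      (∀ y : G, y = f * y * f → iterComm k (f * Θ m * f) y = 0)) ∧
    (∀ n : G, n = f * n * e →
      (∀ x : G, x = e * x * e → iterComm k (e * Θ n * e) x = 0) ∧
      (∀ y : G, y = f * y * f → iterComm k (f * Θ n * f) y = 0)) ∧
    (∀ b : G, b = f * b * f →
      ∀ x : G, x = e * x * e → iterComm k (e * Θ b * e) x = 0) ∧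
    (∀ a : G, a = e * a * e →
      ∀ y : G, y = f * y * f → iterComm k (f * Θ a * f) y = 0) := by
  have he : IsIdempotentElem e := he
  have hf' : IsIdempotentElem f := hf ▸ he.one_sub
  have hef : e + f = 1 := by rw [hf, add_sub_cancel]
  have hfe : f + e = 1 := by rw [add_comm, hef]
  have hfe₀ : f * e = 0 := hf'.mul_eq_zero_of_add_eq_one' hef
  have hef₀ : e * f = 0 := he.mul_eq_zero_of_add_eq_one hef
  replace hΘ : ∀ g, iterComm k (Θ.toAddMonoidHom g) g = 0 := hΘ
  refine ⟨fun m hm => ⟨fun x hx => ?_, fun y hy => ?_⟩,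
    fun n hn => ⟨fun x hx => ?_, fun y hy => ?_⟩, fun b hb x hx => ?_, fun a ha y hy => ?_⟩
  · exact iterComm_ee_corner_map_eq_zero_of_mul_eq_zero he hf' hef hΘ hx
      (mul_eq_zero_of_eq_mul_mul_right hm hfe₀)
  · exact iterComm_ff_corner_map_eq_zero_of_mul_eq_zero he hf' hef hΘ hy
      (mul_eq_zero_of_eq_mul_mul_left hm hfe₀)
  · exact iterComm_ff_corner_map_eq_zero_of_mul_eq_zero hf' he hfe hΘ hx
      (mul_eq_zero_of_eq_mul_mul_left hn hef₀)
  · exact iterComm_ee_corner_map_eq_zero_of_mul_eq_zero hf' he hfe hΘ hy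
      (mul_eq_zero_of_eq_mul_mul_right hn hef₀)
  · exact iterComm_ee_corner_map_eq_zero_of_mul_eq_zero he hf' hef hΘ hx
      (mul_eq_zero_of_eq_mul_mul_right hb hfe₀)
  · exact iterComm_ff_corner_map_eq_zero_of_mul_eq_zero he hf' hef hΘ hy
      (mul_eq_zero_of_eq_mul_mul_left ha hfe₀)

/-- for a k-commuting map `Θ` of the generalized matrix algebra `G`,
`δ2(m), δ3(n), δ4(b) ∈ Z(A)_k` and `μ2(m), μ3(n), μ1(a) ∈ Z(B)_k`. -/
theorem corner_compressions_central
    {R : Type*} [CommRing R] {G : Type*} [Ring G] [Algebra R G]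
    (e : G) (he : e * e = e) (f : G) (hf : f = 1 - e)
    (hMN : (∃ m : G, m = e * m * f ∧ m ≠ 0) ∨ (∃ n : G, n = f * n * e ∧ n ≠ 0))
    (hMfaithL : ∀ a : G, a = e * a * e → (∀ m : G, m = e * m * f → a * m = 0) → a = 0)
    (hMfaithR : ∀ b : G, b = f * b * f → (∀ m : G, m = e * m * f → m * b = 0) → b = 0)
    (k : ℕ) (hk : 2 ≤ k)
    (Θ : G →ₗ[R] G) (hΘ : ∀ g : G, iterComm k (Θ g) g = 0) :
    (∀ m : G, m = e * m * f →
      (∀ x : G, x = e * x * e → iterComm k (e * Θ m * e) x = 0) ∧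
      (∀ y : G, y = f * y * f → iterComm k (f * Θ m * f) y = 0)) ∧
    (∀ n : G, n = f * n * e →
      (∀ x : G, x = e * x * e → iterComm k (e * Θ n * e) x = 0) ∧
      (∀ y : G, y = f * y * f → iterComm k (f * Θ n * f) y = 0)) ∧
    (∀ b : G, b = f * b * f →
      ∀ x : G, x = e * x * e → iterComm k (e * Θ b * e) x = 0) ∧
    (∀ a : G, a = e * a * e →
      ∀ y : G, y = f * y * f → iterComm k (f * Θ a * f) y = 0) :=
  corner_compressions_central_general e he f hf k Θ hΘ
end

section
/- If Θ: G → G is a k-commuting R-linear map, then for all m ∈ M the following two identities hold in G: (δ1(e) + δ4(f) + 2δ2(m))m = m(μ1(e) + μ4(f) + 2μ2(m)), and 2τ2(m) = (δ1(e) − δ4(f))m − m(μ1(e) − μ4(f)). -/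
namespace IsIdempotentElem

variable {G : Type*} [Ring G]

section IterComm

variable {p : G}

theorem one_sub_mul_iterComm_mul (hp : IsIdempotentElem p) (x : G) (i : ℕ) :
    (1 - p) * iterComm i x p * p = (1 - p) * x * p := by
  induction i with
  | zero => rfl
  | succ i ih =>
    rw [iterComm]
    linear_combination (norm := noncomm_ring) ih + ((1 - p) * iterComm i x p) * hp.eq
      - hp.one_sub_mul_self * (iterComm i x p * p)

theorem mul_iterComm_mul_one_sub (hp : IsIdempotentElem p) (x : G) (i : ℕ) :
    p * iterComm i x p * (1 - p) = (-1) ^ i * (p * x * (1 - p)) := by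
  induction i with
  | zero => simp [iterComm]
  | succ i ih =>
    rw [iterComm, pow_succ]
    linear_combination (norm := noncomm_ring) -ih + (p * iterComm i x p) * hp.mul_one_sub_self
      - hp.eq * (iterComm i x p * (1 - p))

theorem offDiag_eq_zero_of_iterComm_eq_zero (hp : IsIdempotentElem p) {x : G} {k : ℕ}
    (h : iterComm k x p = 0) : p * x * (1 - p) = 0 ∧ (1 - p) * x * p = 0 := by
  refine ⟨?_, ?_⟩
  · rw [← neg_one_pow_mul_eq_zero_iff (n := k), ← hp.mul_iterComm_mul_one_sub, h]
    simp
  · rw [← hp.one_sub_mul_iterComm_mul, h]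
    simp

end IterComm

section Corner

variable {e m : G}

theorem mul_corner (he : IsIdempotentElem e) (hm : m = e * m * (1 - e)) : e * m = m := by
  linear_combination (norm := noncomm_ring) (e - 1) * hm + he.eq * (m * (1 - e))

theorem corner_mul_one_sub (he : IsIdempotentElem e) (hm : m = e * m * (1 - e)) :
    m * (1 - e) = m := by
  linear_combination (norm := noncomm_ring) hm * (1 - e) - hm + (e * m) * he.one_sub.eq

theorem corner_mul (he : IsIdempotentElem e) (hm : m = e * m * (1 - e)) : m * e = 0 := by
  linear_combination (norm := noncomm_ring) hm * e + (e * m) * he.one_sub_mul_self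

theorem one_sub_mul_corner (he : IsIdempotentElem e) (hm : m = e * m * (1 - e)) :
    (1 - e) * m = 0 := by
  linear_combination (norm := noncomm_ring) (1 - e) * hm + he.one_sub_mul_self * (m * (1 - e))

theorem corner_mul_corner (he : IsIdempotentElem e) (hm : m = e * m * (1 - e)) : m * m = 0 := by
  linear_combination (norm := noncomm_ring) m * he.one_sub_mul_corner hm + he.corner_mul hm * m

theorem add_corner (he : IsIdempotentElem e) (hm : m = e * m * (1 - e)) :
    IsIdempotentElem (e + m) := by
  show (e + m) * (e + m) = e + m
  linear_combination (norm := noncomm_ring) he.eq + he.mul_corner hm + he.corner_mul hm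
    + he.corner_mul_corner hm

theorem one_sub_add_corner (he : IsIdempotentElem e) (hm : m = e * m * (1 - e)) :
    IsIdempotentElem (1 - e + m) := by
  show (1 - e + m) * (1 - e + m) = 1 - e + m
  linear_combination (norm := noncomm_ring) he.one_sub.eq + he.one_sub_mul_corner hm
    + he.corner_mul_one_sub hm + he.corner_mul_corner hm

theorem one_sub_mul_one_sub_add_corner (he : IsIdempotentElem e) (hm : m = e * m * (1 - e)) :
    (1 - e) * (1 - (e + m)) = 1 - e := by
  linear_combination (norm := noncomm_ring) he.one_sub.eq - he.one_sub_mul_corner hm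

theorem add_corner_mul_self (he : IsIdempotentElem e) (hm : m = e * m * (1 - e)) :
    (e + m) * e = e := by
  linear_combination (norm := noncomm_ring) he.eq + he.corner_mul hm

theorem add_corner_mul_mul_one_sub (he : IsIdempotentElem e) (hm : m = e * m * (1 - e))
    (y : G) :
    (e + m) * y * (1 - (e + m)) =
      e * y * (1 - e) - e * y * e * m + m * ((1 - e) * y * (1 - e))
        - m * ((1 - e) * y * e) * m := by
  linear_combination (norm := noncomm_ring) (e * y) * he.mul_corner hm
    + he.corner_mul hm * (y - y * e - y * e * m) - (m * y) * he.one_sub_mul_corner hm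

theorem one_sub_mul_mul_one_sub_add_corner (he : IsIdempotentElem e)
    (hm : m = e * m * (1 - e)) (y : G) :
    (1 - (1 - e + m)) * y * (1 - e + m) =
      e * y * (1 - e) + e * y * e * m - m * ((1 - e) * y * (1 - e))
        - m * ((1 - e) * y * e) * m := by
  linear_combination (norm := noncomm_ring) -(e * y) * he.mul_corner hm
    + he.corner_mul hm * (y * e - y - y * e * m) - (m * y) * he.one_sub_mul_corner hm

end Corner

section KCommuting

variable {e m : G} {F : Type*} [FunLike F G G] [AddMonoidHomClass F G G] {Θ : F} {k : ℕ}

theorem one_sub_mul_map_corner_mul (hΘ : ∀ g, iterComm k (Θ g) g = 0)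
    (he : IsIdempotentElem e) (hm : m = e * m * (1 - e)) : (1 - e) * Θ m * e = 0 := by
  have h := ((he.add_corner hm).offDiag_eq_zero_of_iterComm_eq_zero (hΘ (e + m))).2
  rw [map_add] at h
  linear_combination (norm := noncomm_ring) (1 - e) * h * e
    - he.one_sub_mul_one_sub_add_corner hm * ((Θ e + Θ m) * (e + m) * e)
    - ((1 - e) * (Θ e + Θ m)) * he.add_corner_mul_self hm
    - (he.offDiag_eq_zero_of_iterComm_eq_zero (hΘ e)).2

theorem mul_map_corner_mul_one_sub_of_add_corner (hΘ : ∀ g, iterComm k (Θ g) g = 0)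
    (he : IsIdempotentElem e) (hm : m = e * m * (1 - e)) :
    e * Θ m * (1 - e) = e * Θ e * e * m + e * Θ m * e * m
      - m * ((1 - e) * Θ e * (1 - e)) - m * ((1 - e) * Θ m * (1 - e)) := by
  have h := ((he.add_corner hm).offDiag_eq_zero_of_iterComm_eq_zero (hΘ (e + m))).1
  rw [he.add_corner_mul_mul_one_sub hm, map_add] at h
  have hΘe := he.offDiag_eq_zero_of_iterComm_eq_zero (hΘ e)
  linear_combination (norm := noncomm_ring) h - hΘe.1 + m * hΘe.2 * m
    + m * one_sub_mul_map_corner_mul hΘ he hm * m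

theorem mul_map_corner_mul_one_sub_of_one_sub_add_corner (hΘ : ∀ g, iterComm k (Θ g) g = 0)
    (he : IsIdempotentElem e) (hm : m = e * m * (1 - e)) :
    e * Θ m * (1 - e) = -(e * Θ (1 - e) * e * m) - e * Θ m * e * m
      + m * ((1 - e) * Θ (1 - e) * (1 - e)) + m * ((1 - e) * Θ m * (1 - e)) := by
  have h := ((he.one_sub_add_corner hm).offDiag_eq_zero_of_iterComm_eq_zero
    (hΘ (1 - e + m))).2
  rw [he.one_sub_mul_mul_one_sub_add_corner hm, map_add] at h
  have hΘf := he.one_sub.offDiag_eq_zero_of_iterComm_eq_zero (hΘ (1 - e))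
  rw [sub_sub_cancel] at hΘf
  linear_combination (norm := noncomm_ring) h - hΘf.2 + m * hΘf.1 * m
    + m * one_sub_mul_map_corner_mul hΘ he hm * m

end KCommuting

end IsIdempotentElem

theorem kCommuting_identities_on_M_general
    {R : Type*} [CommRing R] {G : Type*} [Ring G] [Algebra R G]
    (e : G) (he : e * e = e) (f : G) (hf : f = 1 - e)
    (k : ℕ)
    (Θ : G →ₗ[R] G) (hΘ : ∀ g : G, iterComm k (Θ g) g = 0) :
    ∀ m : G, m = e * m * f →
      (e * Θ e * e + e * Θ f * e + 2 * (e * Θ m * e)) * m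
          = m * (f * Θ e * f + f * Θ f * f + 2 * (f * Θ m * f)) ∧
      2 * (e * Θ m * f)
          = (e * Θ e * e - e * Θ f * e) * m - m * (f * Θ e * f - f * Θ f * f) := by
  intro m hm
  subst hf
  have he : IsIdempotentElem e := he
  have hA := he.mul_map_corner_mul_one_sub_of_add_corner hΘ hm
  have hB := he.mul_map_corner_mul_one_sub_of_one_sub_add_corner hΘ hm
  exact ⟨by linear_combination (norm := noncomm_ring) hB - hA,
    by linear_combination (norm := noncomm_ring) hA + hB⟩

/-- for a k-commuting map `Θ` of the generalized matrix algebra `G` and all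
`m ∈ M = eGf`:
`(δ1(e) + δ4(f) + 2 δ2(m)) m = m (μ1(e) + μ4(f) + 2 μ2(m))` and
`2 τ2(m) = (δ1(e) − δ4(f)) m − m (μ1(e) − μ4(f))`, where `δ1(e) = eΘ(e)e`,
`δ4(f) = eΘ(f)e`, `δ2(m) = eΘ(m)e`, `τ2(m) = eΘ(m)f`, `μ1(e) = fΘ(e)f`,
`μ4(f) = fΘ(f)f`, `μ2(m) = fΘ(m)f`. -/
theorem kCommuting_identities_on_M
    {R : Type*} [CommRing R] {G : Type*} [Ring G] [Algebra R G]
    (e : G) (he : e * e = e) (f : G) (hf : f = 1 - e)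
    (hMN : (∃ m : G, m = e * m * f ∧ m ≠ 0) ∨ (∃ n : G, n = f * n * e ∧ n ≠ 0))
    (hMfaithL : ∀ a : G, a = e * a * e → (∀ m : G, m = e * m * f → a * m = 0) → a = 0)
    (hMfaithR : ∀ b : G, b = f * b * f → (∀ m : G, m = e * m * f → m * b = 0) → b = 0)
    (k : ℕ) (hk : 2 ≤ k)
    (Θ : G →ₗ[R] G) (hΘ : ∀ g : G, iterComm k (Θ g) g = 0) :
    ∀ m : G, m = e * m * f →
      (e * Θ e * e + e * Θ f * e + 2 * (e * Θ m * e)) * m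
          = m * (f * Θ e * f + f * Θ f * f + 2 * (f * Θ m * f)) ∧
      2 * (e * Θ m * f)
          = (e * Θ e * e - e * Θ f * e) * m - m * (f * Θ e * f - f * Θ f * f) :=
  kCommuting_identities_on_M_general e he f hf k Θ hΘ
end

section
/- If Θ: G → G is a k-commuting R-linear map, then for all n ∈ N the following two identities hold in G: n(δ1(e) + δ4(f) + 2δ3(n)) = (μ1(e) + μ4(f) + 2μ3(n))n, and 2ν3(n) = n(δ1(e) − δ4(f)) − (μ1(e) − μ4(f))n. -/
section
variable {G : Type*} [Ring G] {p : G}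

theorem IsIdempotentElem.iterComm_add_three (hp : IsIdempotentElem p) (x : G) (i : ℕ) :
    iterComm (i + 3) x p = iterComm (i + 1) x p := by
  induction i with
  | zero =>
    have hpp (y : G) : p * (p * y) = p * y := by rw [← mul_assoc, hp.eq]
    simp only [iterComm, mul_sub, sub_mul, mul_assoc, hp.eq, hpp]
    abel
  | succ i ih => simp only [iterComm] at ih ⊢; rw [ih]

theorem IsIdempotentElem.iterComm_one_eq_zero (hp : IsIdempotentElem p) {x : G} :
    ∀ {k : ℕ}, k ≠ 0 → iterComm k x p = 0 → iterComm 1 x p = 0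
  | 1, _, h => h
  | 2, _, h => by
    rw [← zero_add 1, ← hp.iterComm_add_three, iterComm, h, zero_mul, mul_zero, sub_zero]
  | i + 3, _, h => hp.iterComm_one_eq_zero i.succ_ne_zero (hp.iterComm_add_three x i ▸ h)

theorem IsIdempotentElem.commute_of_iterComm_eq_zero (hp : IsIdempotentElem p) {x : G} {k : ℕ}
    (hk : k ≠ 0) (h : iterComm k x p = 0) : Commute x p :=
  sub_eq_zero.mp (hp.iterComm_one_eq_zero hk h)

theorem IsIdempotentElem.add_of_eq_mul_mul {e : G} (he : IsIdempotentElem e) {n : G}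
    (hn : n = (1 - e) * n * e) : IsIdempotentElem (e + n) := by
  have hen : e * n = 0 := by
    rw [hn, ← mul_assoc, ← mul_assoc, mul_sub, mul_one, he.eq, sub_self, zero_mul, zero_mul]
  have hne : n * e = n := by rw [hn, mul_assoc, he.eq]
  have hnn : n * n = 0 := by rw [← hne, mul_assoc, ← mul_assoc e, hen, zero_mul, mul_zero]
  simp only [IsIdempotentElem, mul_add, add_mul, he.eq, hen, hne, hnn, add_zero]

theorem Commute.of_one_sub_right {x : G} (h : Commute x (1 - p)) : Commute x p := by
  simpa only [sub_sub_cancel] using (Commute.one_right x).sub_right h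

theorem IsIdempotentElem.one_sub_mul_mul_eq_zero (hp : IsIdempotentElem p) {x : G}
    (hx : Commute x p) : (1 - p) * x * p = 0 := by
  rw [mul_assoc, hx.eq, ← mul_assoc, hp.one_sub_mul_self, zero_mul]

theorem IsIdempotentElem.offDiag_add_mul_eq_of_commute_add {e : G} (he : IsIdempotentElem e)
    {n x : G} (hn : n = (1 - e) * n * e) (hx : Commute x (e + n)) :
    (1 - e) * x * e + (1 - e) * x * (1 - e) * n = n * (e * x * e) := by
  have hfn : (1 - e) * n = n := by rw [hn, ← mul_assoc, ← mul_assoc, he.one_sub.eq]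
  have hne : n * e = n := by rw [hn, mul_assoc, he.eq]
  have hyne (y : G) : y * n * e = y * n := by rw [mul_assoc, hne]
  have hyfn : (1 - e) * x * (1 - e) * n = (1 - e) * x * n := by rw [mul_assoc _ (1 - e), hfn]
  have hyee : (1 - e) * x * e * e = (1 - e) * x * e := by rw [mul_assoc, he.eq]
  have h := congrArg (fun y => (1 - e) * y * e) hx.eq
  simp only [mul_add, add_mul, ← mul_assoc, he.one_sub_mul_self, zero_mul, zero_add, hfn, hyne,
    hyee] at h
  rw [hyfn, h, ← mul_assoc, ← mul_assoc, hne]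
end

theorem kCommuting_identities_on_N_general
    {R : Type*} [CommRing R] {G : Type*} [Ring G] [Algebra R G]
    (e : G) (he : e * e = e) (f : G) (hf : f = 1 - e)
    (k : ℕ) (hk : 2 ≤ k)
    (Θ : G →ₗ[R] G) (hΘ : ∀ g : G, iterComm k (Θ g) g = 0) :
    ∀ n : G, n = f * n * e →
      n * (e * Θ e * e + e * Θ f * e + 2 * (e * Θ n * e))
          = (f * Θ e * f + f * Θ f * f + 2 * (f * Θ n * f)) * n ∧
      2 * (f * Θ n * e)
          = n * (e * Θ e * e - e * Θ f * e) - (f * Θ e * f - f * Θ f * f) * n := by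
  intro n hn
  subst hf
  replace he : IsIdempotentElem e := he
  have hcomm (p : G) (hp : IsIdempotentElem p) : Commute (Θ p) p :=
    hp.commute_of_iterComm_eq_zero (by omega) (hΘ p)
  have hae := he.one_sub_mul_mul_eq_zero (hcomm e he)
  have hbe := he.one_sub_mul_mul_eq_zero (hcomm (1 - e) he.one_sub).of_one_sub_right
  have hn' : -n = (1 - e) * -n * e := by rw [mul_neg, neg_mul, ← hn]
  have h1 := he.offDiag_add_mul_eq_of_commute_add hn
    (x := Θ e + Θ n) (by simpa only [map_add] using hcomm _ (he.add_of_eq_mul_mul hn))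
  have h2 := he.offDiag_add_mul_eq_of_commute_add hn' (x := Θ (1 - e) + Θ n) <| by
    have := (hcomm _ (he.add_of_eq_mul_mul hn').one_sub).of_one_sub_right
    rwa [sub_add_eq_sub_sub, sub_neg_eq_add, map_add] at this
  simp only [mul_add, add_mul, mul_neg, neg_mul, hae, hbe, zero_add] at h1 h2
  -- `abel` must treat `f` as an atom rather than as `1 - e`
  set f := 1 - e
  simp only [mul_add, add_mul, mul_sub, sub_mul, two_mul]
  constructor
  · linear_combination (norm := abel) h2 - h1
  · linear_combination (norm := abel) h1 + h2

/-- for a k-commuting map `Θ` of the generalized matrix algebra `G` and all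
`n ∈ N = fGe`:
`n (δ1(e) + δ4(f) + 2 δ3(n)) = (μ1(e) + μ4(f) + 2 μ3(n)) n` and
`2 ν3(n) = n (δ1(e) − δ4(f)) − (μ1(e) − μ4(f)) n`, where `δ1(e) = eΘ(e)e`,
`δ4(f) = eΘ(f)e`, `δ3(n) = eΘ(n)e`, `ν3(n) = fΘ(n)e`, `μ1(e) = fΘ(e)f`,
`μ4(f) = fΘ(f)f`, `μ3(n) = fΘ(n)f`. -/
theorem kCommuting_identities_on_N
    {R : Type*} [CommRing R] {G : Type*} [Ring G] [Algebra R G]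
    (e : G) (he : e * e = e) (f : G) (hf : f = 1 - e)
    (hMN : (∃ m : G, m = e * m * f ∧ m ≠ 0) ∨ (∃ n : G, n = f * n * e ∧ n ≠ 0))
    (hMfaithL : ∀ a : G, a = e * a * e → (∀ m : G, m = e * m * f → a * m = 0) → a = 0)
    (hMfaithR : ∀ b : G, b = f * b * f → (∀ m : G, m = e * m * f → m * b = 0) → b = 0)
    (k : ℕ) (hk : 2 ≤ k)
    (Θ : G →ₗ[R] G) (hΘ : ∀ g : G, iterComm k (Θ g) g = 0) :
    ∀ n : G, n = f * n * e →
      n * (e * Θ e * e + e * Θ f * e + 2 * (e * Θ n * e))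
          = (f * Θ e * f + f * Θ f * f + 2 * (f * Θ n * f)) * n ∧
      2 * (f * Θ n * e)
          = n * (e * Θ e * e - e * Θ f * e) - (f * Θ e * f - f * Θ f * f) * n :=
  kCommuting_identities_on_N_general e he f hf k hk Θ hΘ
end

section
/- An R-linear map D: G → G is a derivation (i.e., D(xy) = D(x)y + xD(y) for all x, y ∈ G) if and only if there exist m0 ∈ M, n0 ∈ N and R-linear maps δ1: A → A, τ2: M → M, ν3: N → N, μ4: B → B such that D(a + m + n + b) = (δ1(a) − mn0 − m0n) + (am0 − m0b + τ2(m)) + (n0a − bn0 + ν3(n)) + (n0m + nm0 + μ4(b)) for all a ∈ A, m ∈ M, n ∈ N, b ∈ B, where: (1) δ1 is a derivation of A with δ1(mn) = τ2(m)n + mν3(n) for all m ∈ M, n ∈ N; (2) μ4 is a derivation of B with μ4(nm) = nτ2(m) + ν3(n)m for all m ∈ M, n ∈ N; (3) τ2(am) = aτ2(m) + δ1(a)m and τ2(mb) = τ2(m)b + mμ4(b) for all a ∈ A, m ∈ M, b ∈ B; (4) ν3(na) = ν3(n)a + nδ1(a) and ν3(bn) = bν3(n) + μ4(b)n for all a ∈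 A, n ∈ N, b ∈ B. -/
lemma gm_corner_facts {G : Type*} [Ring G] {p q p' q' x : G} (hp : p*p = p) (hq : q*q = q)
    (hp' : p'*p = 0) (hq' : q*q' = 0) (hx : x = p*x*q) :
    p*x = x ∧ x*q = x ∧ p'*x = 0 ∧ x*q' = 0 := by
  refine ⟨?_, ?_, ?_, ?_⟩
  · conv_lhs => rw [hx]
    rw [← mul_assoc, ← mul_assoc, hp, ← hx]
  · conv_lhs => rw [hx]
    rw [mul_assoc, hq, ← hx]
  · conv_lhs => rw [hx]
    rw [← mul_assoc, ← mul_assoc, hp', zero_mul, zero_mul]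
  · conv_lhs => rw [hx]
    rw [mul_assoc, hq', mul_zero]

lemma gm_cross_zero {G : Type*} [Ring G] {u v w : G} (hu : u * w = 0) (hv : w * v = v) :
    u * v = 0 := by rw [← hv, ← mul_assoc, hu, zero_mul]

lemma gm_corner_mul {G : Type*} [Ring G] {p r u v : G} (hu : p*u = u) (hv : v*r = v) :
    u*v = p*(u*v)*r := by rw [← mul_assoc, hu, mul_assoc, hv]

lemma gm_massoc {G : Type*} [Ring G] {u v w : G} (h : u * v = w) (x : G) :
    u * (v * x) = w * x := by rw [← mul_assoc, h]

/-- characterization of derivations of a generalized matrix algebra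
(Proposition 4.2 of Li–Wei). An `R`-linear map `D : G → G` is a derivation iff there exist
`m0 ∈ M`, `n0 ∈ N` and `R`-linear maps `δ1 : A → A`, `τ2 : M → M`, `ν3 : N → N`,
`μ4 : B → B` (here realized as `R`-linear maps of `G` preserving the corresponding Peirce
corners) satisfying the stated compatibility conditions, such that
`D(a + m + n + b) = (δ1(a) − m n0 − m0 n) + (a m0 − m0 b + τ2(m)) + (n0 a − b n0 + ν3(n))
  + (n0 m + n m0 + μ4(b))`. -/
theorem derivation_characterization
    {R : Type*} [CommRing R] {G : Type*} [Ring G] [Algebra R G]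
    (e : G) (he : e * e = e) (f : G) (hf : f = 1 - e)
    (hMN : (∃ m : G, m = e * m * f ∧ m ≠ 0) ∨ (∃ n : G, n = f * n * e ∧ n ≠ 0))
    (hMfaithL : ∀ a : G, a = e * a * e → (∀ m : G, m = e * m * f → a * m = 0) → a = 0)
    (hMfaithR : ∀ b : G, b = f * b * f → (∀ m : G, m = e * m * f → m * b = 0) → b = 0)
    (D : G →ₗ[R] G) :
    (∀ x y : G, D (x * y) = D x * y + x * D y) ↔
    ∃ m0 n0 : G, m0 = e * m0 * f ∧ n0 = f * n0 * e ∧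
    ∃ δ1 τ2 ν3 μ4 : G →ₗ[R] G,
      (∀ a : G, a = e * a * e → δ1 a = e * δ1 a * e) ∧
      (∀ m : G, m = e * m * f → τ2 m = e * τ2 m * f) ∧
      (∀ n : G, n = f * n * e → ν3 n = f * ν3 n * e) ∧
      (∀ b : G, b = f * b * f → μ4 b = f * μ4 b * f) ∧
      (∀ a m n b : G, a = e * a * e → m = e * m * f → n = f * n * e → b = f * b * f →
        D (a + m + n + b) = (δ1 a - m * n0 - m0 * n) + (a * m0 - m0 * b + τ2 m)
          + (n0 * a - b * n0 + ν3 n) + (n0 * m + n * m0 + μ4 b)) ∧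
      -- (1) δ1 is a derivation of A with δ1(mn) = τ2(m)n + mν3(n)
      (∀ a a' : G, a = e * a * e → a' = e * a' * e →
        δ1 (a * a') = δ1 a * a' + a * δ1 a') ∧
      (∀ m n : G, m = e * m * f → n = f * n * e →
        δ1 (m * n) = τ2 m * n + m * ν3 n) ∧
      -- (2) μ4 is a derivation of B with μ4(nm) = nτ2(m) + ν3(n)m
      (∀ b b' : G, b = f * b * f → b' = f * b' * f →
        μ4 (b * b') = μ4 b * b' + b * μ4 b') ∧
      (∀ m n : G, m = e * m * f → n = f * n * e →
        μ4 (n * m) = n * τ2 m + ν3 n * m) ∧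
      -- (3)
      (∀ a m : G, a = e * a * e → m = e * m * f →
        τ2 (a * m) = a * τ2 m + δ1 a * m) ∧
      (∀ m b : G, m = e * m * f → b = f * b * f →
        τ2 (m * b) = τ2 m * b + m * μ4 b) ∧
      -- (4)
      (∀ n a : G, n = f * n * e → a = e * a * e →
        ν3 (n * a) = ν3 n * a + n * δ1 a) ∧
      (∀ b n : G, b = f * b * f → n = f * n * e →
        ν3 (b * n) = b * ν3 n + μ4 b * n) := by
  have hef : e * f = 0 := by rw [hf, mul_sub, mul_one, he, sub_self]
  have hfe : f * e = 0 := by rw [hf, sub_mul, one_mul, he, sub_self]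
  have hff : f * f = f := by rw [hf, mul_sub, mul_one, sub_mul, one_mul, he, sub_self, sub_zero]
  have hdecomp : ∀ x : G, x = e*x*e + e*x*f + f*x*e + f*x*f := by
    intro x; rw [hf]; noncomm_ring
  constructor
  · intro hD
    have hD1 : D 1 = 0 := by
      have h := hD 1 1
      rw [mul_one, mul_one, one_mul] at h
      exact left_eq_add.mp h
    have hDf : D f = -D e := by rw [hf, map_sub, hD1, zero_sub]
    refine ⟨e * D e * f, f * D e * e, gm_corner_mul (by rw [← mul_assoc, he]) hff,
      gm_corner_mul (by rw [← mul_assoc, hff]) he,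
      (LinearMap.mulRight R e).comp ((LinearMap.mulLeft R e).comp D),
      (LinearMap.mulRight R f).comp ((LinearMap.mulLeft R e).comp D),
      (LinearMap.mulRight R e).comp ((LinearMap.mulLeft R f).comp D),
      (LinearMap.mulRight R f).comp ((LinearMap.mulLeft R f).comp D),
      ?_, ?_, ?_, ?_, ?_, ?_, ?_, ?_, ?_, ?_, ?_, ?_, ?_⟩
    · intro a _; simp only [LinearMap.comp_apply, LinearMap.mulLeft_apply, LinearMap.mulRight_apply]; exact gm_corner_mul (by rw [← mul_assoc, he]) he
    · intro m _; simp only [LinearMap.comp_apply, LinearMap.mulLeft_apply, LinearMap.mulRight_apply]; exact gm_corner_mul (by rw [← mul_assoc, he]) hff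
    · intro n _; simp only [LinearMap.comp_apply, LinearMap.mulLeft_apply, LinearMap.mulRight_apply]; exact gm_corner_mul (by rw [← mul_assoc, hff]) he
    · intro b _; simp only [LinearMap.comp_apply, LinearMap.mulLeft_apply, LinearMap.mulRight_apply]; exact gm_corner_mul (by rw [← mul_assoc, hff]) hff
    · intro a m n b ha hm hn hb
      obtain ⟨a_l, a_r, a_lz, a_rz⟩ := gm_corner_facts he he hfe hef (ha)
      obtain ⟨m_l, m_r, m_lz, m_rz⟩ := gm_corner_facts he hff hfe hfe (hm)
      obtain ⟨n_l, n_r, n_lz, n_rz⟩ := gm_corner_facts hff he hef hef (hn)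
      obtain ⟨b_l, b_r, b_lz, b_rz⟩ := gm_corner_facts hff hff hef hfe (hb)
      have hA1 : D a = D a * e + a * D e := by have h := hD a e; rwa [a_r] at h
      have hA2 : D a = D e * a + e * D a := by have h := hD e a; rwa [a_l] at h
      have hM1 : D m = D m * f + m * D f := by have h := hD m f; rwa [m_r] at h
      have hM2 : D m = D e * m + e * D m := by have h := hD e m; rwa [m_l] at h
      have hN1 : D n = D n * e + n * D e := by have h := hD n e; rwa [n_r] at h
      have hN2 : D n = D f * n + f * D n := by have h := hD f n; rwa [n_l] at h
      have hB1 : D b = D b * f + b * D f := by have h := hD b f; rwa [b_r] at h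
      have hB2 : D b = D f * b + f * D b := by have h := hD f b; rwa [b_l] at h
      have eDaf : e*D a*f = a*(e*D e*f) := by
        conv_lhs => rw [hA1]
        simp only [hDf, mul_assoc, mul_add, add_mul, mul_sub, sub_mul, mul_neg, neg_mul, neg_neg, mul_zero, zero_mul, add_zero, zero_add, neg_zero, sub_zero, zero_sub, he, hef, hfe, hff, gm_massoc he, gm_massoc hef, gm_massoc hfe, gm_massoc hff, a_l, gm_massoc a_l, a_r, gm_massoc a_r, a_lz, gm_massoc a_lz, a_rz, gm_massoc a_rz, m_l, gm_massoc m_l, m_r, gm_massoc m_r, m_lz, gm_massoc m_lz, m_rz, gm_massoc m_rz, n_l, gm_massoc n_l, n_r, gm_massoc n_r, n_lz, gm_massoc n_lz, n_rz, gm_massoc n_rz, b_l, gm_massoc b_l, b_r, gm_massoc b_r, b_lz, gm_massoc b_lz, b_rz, gm_massoc b_rz]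
      have fDae : f*D a*e = f*D e*e*a := by
        conv_lhs => rw [hA2]
        simp only [hDf, mul_assoc, mul_add, add_mul, mul_sub, sub_mul, mul_neg, neg_mul, neg_neg, mul_zero, zero_mul, add_zero, zero_add, neg_zero, sub_zero, zero_sub, he, hef, hfe, hff, gm_massoc he, gm_massoc hef, gm_massoc hfe, gm_massoc hff, a_l, gm_massoc a_l, a_r, gm_massoc a_r, a_lz, gm_massoc a_lz, a_rz, gm_massoc a_rz, m_l, gm_massoc m_l, m_r, gm_massoc m_r, m_lz, gm_massoc m_lz, m_rz, gm_massoc m_rz, n_l, gm_massoc n_l, n_r, gm_massoc n_r, n_lz, gm_massoc n_lz, n_rz, gm_massoc n_rz, b_l, gm_massoc b_l, b_r, gm_massoc b_r, b_lz, gm_massoc b_lz, b_rz, gm_massoc b_rz]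
      have fDaf : f*D a*f = 0 := by
        conv_lhs => rw [hA1]
        simp only [hDf, mul_assoc, mul_add, add_mul, mul_sub, sub_mul, mul_neg, neg_mul, neg_neg, mul_zero, zero_mul, add_zero, zero_add, neg_zero, sub_zero, zero_sub, he, hef, hfe, hff, gm_massoc he, gm_massoc hef, gm_massoc hfe, gm_massoc hff, a_l, gm_massoc a_l, a_r, gm_massoc a_r, a_lz, gm_massoc a_lz, a_rz, gm_massoc a_rz, m_l, gm_massoc m_l, m_r, gm_massoc m_r, m_lz, gm_massoc m_lz, m_rz, gm_massoc m_rz, n_l, gm_massoc n_l, n_r, gm_massoc n_r, n_lz, gm_massoc n_lz, n_rz, gm_massoc n_rz, b_l, gm_massoc b_l, b_r, gm_massoc b_r, b_lz, gm_massoc b_lz, b_rz, gm_massoc b_rz]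
      have eDme : e*D m*e = -(m*(f*D e*e)) := by
        conv_lhs => rw [hM1]
        simp only [hDf, mul_assoc, mul_add, add_mul, mul_sub, sub_mul, mul_neg, neg_mul, neg_neg, mul_zero, zero_mul, add_zero, zero_add, neg_zero, sub_zero, zero_sub, he, hef, hfe, hff, gm_massoc he, gm_massoc hef, gm_massoc hfe, gm_massoc hff, a_l, gm_massoc a_l, a_r, gm_massoc a_r, a_lz, gm_massoc a_lz, a_rz, gm_massoc a_rz, m_l, gm_massoc m_l, m_r, gm_massoc m_r, m_lz, gm_massoc m_lz, m_rz, gm_massoc m_rz, n_l, gm_massoc n_l, n_r, gm_massoc n_r, n_lz, gm_massoc n_lz, n_rz, gm_massoc n_rz, b_l, gm_massoc b_l, b_r, gm_massoc b_r, b_lz, gm_massoc b_lz, b_rz, gm_massoc b_rz]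
      have fDmf : f*D m*f = f*D e*e*m := by
        conv_lhs => rw [hM2]
        simp only [hDf, mul_assoc, mul_add, add_mul, mul_sub, sub_mul, mul_neg, neg_mul, neg_neg, mul_zero, zero_mul, add_zero, zero_add, neg_zero, sub_zero, zero_sub, he, hef, hfe, hff, gm_massoc he, gm_massoc hef, gm_massoc hfe, gm_massoc hff, a_l, gm_massoc a_l, a_r, gm_massoc a_r, a_lz, gm_massoc a_lz, a_rz, gm_massoc a_rz, m_l, gm_massoc m_l, m_r, gm_massoc m_r, m_lz, gm_massoc m_lz, m_rz, gm_massoc m_rz, n_l, gm_massoc n_l, n_r, gm_massoc n_r, n_lz, gm_massoc n_lz, n_rz, gm_massoc n_rz, b_l, gm_massoc b_l, b_r, gm_massoc b_r, b_lz, gm_massoc b_lz, b_rz, gm_massoc b_rz]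
      have fDme : f*D m*e = 0 := by
        conv_lhs => rw [hM1]
        simp only [hDf, mul_assoc, mul_add, add_mul, mul_sub, sub_mul, mul_neg, neg_mul, neg_neg, mul_zero, zero_mul, add_zero, zero_add, neg_zero, sub_zero, zero_sub, he, hef, hfe, hff, gm_massoc he, gm_massoc hef, gm_massoc hfe, gm_massoc hff, a_l, gm_massoc a_l, a_r, gm_massoc a_r, a_lz, gm_massoc a_lz, a_rz, gm_massoc a_rz, m_l, gm_massoc m_l, m_r, gm_massoc m_r, m_lz, gm_massoc m_lz, m_rz, gm_massoc m_rz, n_l, gm_massoc n_l, n_r, gm_massoc n_r, n_lz, gm_massoc n_lz, n_rz, gm_massoc n_rz, b_l, gm_massoc b_l, b_r, gm_massoc b_r, b_lz, gm_massoc b_lz, b_rz, gm_massoc b_rz]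
      have eDne : e*D n*e = -(e*D e*f*n) := by
        conv_lhs => rw [hN2]
        simp only [hDf, mul_assoc, mul_add, add_mul, mul_sub, sub_mul, mul_neg, neg_mul, neg_neg, mul_zero, zero_mul, add_zero, zero_add, neg_zero, sub_zero, zero_sub, he, hef, hfe, hff, gm_massoc he, gm_massoc hef, gm_massoc hfe, gm_massoc hff, a_l, gm_massoc a_l, a_r, gm_massoc a_r, a_lz, gm_massoc a_lz, a_rz, gm_massoc a_rz, m_l, gm_massoc m_l, m_r, gm_massoc m_r, m_lz, gm_massoc m_lz, m_rz, gm_massoc m_rz, n_l, gm_massoc n_l, n_r, gm_massoc n_r, n_lz, gm_massoc n_lz, n_rz, gm_massoc n_rz, b_l, gm_massoc b_l, b_r, gm_massoc b_r, b_lz, gm_massoc b_lz, b_rz, gm_massoc b_rz]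
      have fDnf : f*D n*f = n*(e*D e*f) := by
        conv_lhs => rw [hN1]
        simp only [hDf, mul_assoc, mul_add, add_mul, mul_sub, sub_mul, mul_neg, neg_mul, neg_neg, mul_zero, zero_mul, add_zero, zero_add, neg_zero, sub_zero, zero_sub, he, hef, hfe, hff, gm_massoc he, gm_massoc hef, gm_massoc hfe, gm_massoc hff, a_l, gm_massoc a_l, a_r, gm_massoc a_r, a_lz, gm_massoc a_lz, a_rz, gm_massoc a_rz, m_l, gm_massoc m_l, m_r, gm_massoc m_r, m_lz, gm_massoc m_lz, m_rz, gm_massoc m_rz, n_l, gm_massoc n_l, n_r, gm_massoc n_r, n_lz, gm_massoc n_lz, n_rz, gm_massoc n_rz, b_l, gm_massoc b_l, b_r, gm_massoc b_r, b_lz, gm_massoc b_lz, b_rz, gm_massoc b_rz]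
      have eDnf : e*D n*f = 0 := by
        conv_lhs => rw [hN1]
        simp only [hDf, mul_assoc, mul_add, add_mul, mul_sub, sub_mul, mul_neg, neg_mul, neg_neg, mul_zero, zero_mul, add_zero, zero_add, neg_zero, sub_zero, zero_sub, he, hef, hfe, hff, gm_massoc he, gm_massoc hef, gm_massoc hfe, gm_massoc hff, a_l, gm_massoc a_l, a_r, gm_massoc a_r, a_lz, gm_massoc a_lz, a_rz, gm_massoc a_rz, m_l, gm_massoc m_l, m_r, gm_massoc m_r, m_lz, gm_massoc m_lz, m_rz, gm_massoc m_rz, n_l, gm_massoc n_l, n_r, gm_massoc n_r, n_lz, gm_massoc n_lz, n_rz, gm_massoc n_rz, b_l, gm_massoc b_l, b_r, gm_massoc b_r, b_lz, gm_massoc b_lz, b_rz, gm_massoc b_rz]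
      have eDbf : e*D b*f = -(e*D e*f*b) := by
        conv_lhs => rw [hB2]
        simp only [hDf, mul_assoc, mul_add, add_mul, mul_sub, sub_mul, mul_neg, neg_mul, neg_neg, mul_zero, zero_mul, add_zero, zero_add, neg_zero, sub_zero, zero_sub, he, hef, hfe, hff, gm_massoc he, gm_massoc hef, gm_massoc hfe, gm_massoc hff, a_l, gm_massoc a_l, a_r, gm_massoc a_r, a_lz, gm_massoc a_lz, a_rz, gm_massoc a_rz, m_l, gm_massoc m_l, m_r, gm_massoc m_r, m_lz, gm_massoc m_lz, m_rz, gm_massoc m_rz, n_l, gm_massoc n_l, n_r, gm_massoc n_r, n_lz, gm_massoc n_lz, n_rz, gm_massoc n_rz, b_l, gm_massoc b_l, b_r, gm_massoc b_r, b_lz, gm_massoc b_lz, b_rz, gm_massoc b_rz]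
      have fDbe : f*D b*e = -(b*(f*D e*e)) := by
        conv_lhs => rw [hB1]
        simp only [hDf, mul_assoc, mul_add, add_mul, mul_sub, sub_mul, mul_neg, neg_mul, neg_neg, mul_zero, zero_mul, add_zero, zero_add, neg_zero, sub_zero, zero_sub, he, hef, hfe, hff, gm_massoc he, gm_massoc hef, gm_massoc hfe, gm_massoc hff, a_l, gm_massoc a_l, a_r, gm_massoc a_r, a_lz, gm_massoc a_lz, a_rz, gm_massoc a_rz, m_l, gm_massoc m_l, m_r, gm_massoc m_r, m_lz, gm_massoc m_lz, m_rz, gm_massoc m_rz, n_l, gm_massoc n_l, n_r, gm_massoc n_r, n_lz, gm_massoc n_lz, n_rz, gm_massoc n_rz, b_l, gm_massoc b_l, b_r, gm_massoc b_r, b_lz, gm_massoc b_lz, b_rz, gm_massoc b_rz]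
      have eDbe : e*D b*e = 0 := by
        conv_lhs => rw [hB2]
        simp only [hDf, mul_assoc, mul_add, add_mul, mul_sub, sub_mul, mul_neg, neg_mul, neg_neg, mul_zero, zero_mul, add_zero, zero_add, neg_zero, sub_zero, zero_sub, he, hef, hfe, hff, gm_massoc he, gm_massoc hef, gm_massoc hfe, gm_massoc hff, a_l, gm_massoc a_l, a_r, gm_massoc a_r, a_lz, gm_massoc a_lz, a_rz, gm_massoc a_rz, m_l, gm_massoc m_l, m_r, gm_massoc m_r, m_lz, gm_massoc m_lz, m_rz, gm_massoc m_rz, n_l, gm_massoc n_l, n_r, gm_massoc n_r, n_lz, gm_massoc n_lz, n_rz, gm_massoc n_rz, b_l, gm_massoc b_l, b_r, gm_massoc b_r, b_lz, gm_massoc b_lz, b_rz, gm_massoc b_rz]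
      have h1 := hdecomp (D a)
      rw [eDaf, fDae, fDaf, add_zero] at h1
      have h2 := hdecomp (D m)
      rw [eDme, fDmf, fDme, add_zero] at h2
      have h3 := hdecomp (D n)
      rw [eDne, fDnf, eDnf, add_zero] at h3
      have h4 := hdecomp (D b)
      rw [eDbe, eDbf, fDbe, zero_add] at h4
      simp only [LinearMap.comp_apply, LinearMap.mulLeft_apply, LinearMap.mulRight_apply]
      conv_lhs => rw [map_add, map_add, map_add, h1, h2, h3, h4]
      abel
    · intro a c hu hv
      obtain ⟨a_l, a_r, a_lz, a_rz⟩ := gm_corner_facts he he hfe hef (hu)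
      obtain ⟨c_l, c_r, c_lz, c_rz⟩ := gm_corner_facts he he hfe hef (hv)
      simp only [LinearMap.comp_apply, LinearMap.mulLeft_apply, LinearMap.mulRight_apply]
      rw [hD a c]
      simp only [mul_assoc, mul_add, add_mul, mul_sub, sub_mul, mul_neg, neg_mul, neg_neg, mul_zero, zero_mul, add_zero, zero_add, neg_zero, sub_zero, zero_sub, he, hef, hfe, hff, gm_massoc he, gm_massoc hef, gm_massoc hfe, gm_massoc hff, a_l, gm_massoc a_l, a_r, gm_massoc a_r, a_lz, gm_massoc a_lz, a_rz, gm_massoc a_rz, c_l, gm_massoc c_l, c_r, gm_massoc c_r, c_lz, gm_massoc c_lz, c_rz, gm_massoc c_rz]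
      try abel
    · intro m n hu hv
      obtain ⟨m_l, m_r, m_lz, m_rz⟩ := gm_corner_facts he hff hfe hfe (hu)
      obtain ⟨n_l, n_r, n_lz, n_rz⟩ := gm_corner_facts hff he hef hef (hv)
      simp only [LinearMap.comp_apply, LinearMap.mulLeft_apply, LinearMap.mulRight_apply]
      rw [hD m n]
      simp only [mul_assoc, mul_add, add_mul, mul_sub, sub_mul, mul_neg, neg_mul, neg_neg, mul_zero, zero_mul, add_zero, zero_add, neg_zero, sub_zero, zero_sub, he, hef, hfe, hff, gm_massoc he, gm_massoc hef, gm_massoc hfe, gm_massoc hff, m_l, gm_massoc m_l, m_r, gm_massoc m_r, m_lz, gm_massoc m_lz, m_rz, gm_massoc m_rz, n_l, gm_massoc n_l, n_r, gm_massoc n_r, n_lz, gm_massoc n_lz, n_rz, gm_massoc n_rz]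
      try abel
    · intro b d hu hv
      obtain ⟨b_l, b_r, b_lz, b_rz⟩ := gm_corner_facts hff hff hef hfe (hu)
      obtain ⟨d_l, d_r, d_lz, d_rz⟩ := gm_corner_facts hff hff hef hfe (hv)
      simp only [LinearMap.comp_apply, LinearMap.mulLeft_apply, LinearMap.mulRight_apply]
      rw [hD b d]
      simp only [mul_assoc, mul_add, add_mul, mul_sub, sub_mul, mul_neg, neg_mul, neg_neg, mul_zero, zero_mul, add_zero, zero_add, neg_zero, sub_zero, zero_sub, he, hef, hfe, hff, gm_massoc he, gm_massoc hef, gm_massoc hfe, gm_massoc hff, b_l, gm_massoc b_l, b_r, gm_massoc b_r, b_lz, gm_massoc b_lz, b_rz, gm_massoc b_rz, d_l, gm_massoc d_l, d_r, gm_massoc d_r, d_lz, gm_massoc d_lz, d_rz, gm_massoc d_rz]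
      try abel
    · intro m n hu hv
      obtain ⟨m_l, m_r, m_lz, m_rz⟩ := gm_corner_facts he hff hfe hfe (hu)
      obtain ⟨n_l, n_r, n_lz, n_rz⟩ := gm_corner_facts hff he hef hef (hv)
      simp only [LinearMap.comp_apply, LinearMap.mulLeft_apply, LinearMap.mulRight_apply]
      rw [hD n m]
      simp only [mul_assoc, mul_add, add_mul, mul_sub, sub_mul, mul_neg, neg_mul, neg_neg, mul_zero, zero_mul, add_zero, zero_add, neg_zero, sub_zero, zero_sub, he, hef, hfe, hff, gm_massoc he, gm_massoc hef, gm_massoc hfe, gm_massoc hff, m_l, gm_massoc m_l, m_r, gm_massoc m_r, m_lz, gm_massoc m_lz, m_rz, gm_massoc m_rz, n_l, gm_massoc n_l, n_r, gm_massoc n_r, n_lz, gm_massoc n_lz, n_rz, gm_massoc n_rz]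
      try abel
    · intro a m hu hv
      obtain ⟨a_l, a_r, a_lz, a_rz⟩ := gm_corner_facts he he hfe hef (hu)
      obtain ⟨m_l, m_r, m_lz, m_rz⟩ := gm_corner_facts he hff hfe hfe (hv)
      simp only [LinearMap.comp_apply, LinearMap.mulLeft_apply, LinearMap.mulRight_apply]
      rw [hD a m]
      simp only [mul_assoc, mul_add, add_mul, mul_sub, sub_mul, mul_neg, neg_mul, neg_neg, mul_zero, zero_mul, add_zero, zero_add, neg_zero, sub_zero, zero_sub, he, hef, hfe, hff, gm_massoc he, gm_massoc hef, gm_massoc hfe, gm_massoc hff, a_l, gm_massoc a_l, a_r, gm_massoc a_r, a_lz, gm_massoc a_lz, a_rz, gm_massoc a_rz, m_l, gm_massoc m_l, m_r, gm_massoc m_r, m_lz, gm_massoc m_lz, m_rz, gm_massoc m_rz]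
      try abel
    · intro m b hu hv
      obtain ⟨m_l, m_r, m_lz, m_rz⟩ := gm_corner_facts he hff hfe hfe (hu)
      obtain ⟨b_l, b_r, b_lz, b_rz⟩ := gm_corner_facts hff hff hef hfe (hv)
      simp only [LinearMap.comp_apply, LinearMap.mulLeft_apply, LinearMap.mulRight_apply]
      rw [hD m b]
      simp only [mul_assoc, mul_add, add_mul, mul_sub, sub_mul, mul_neg, neg_mul, neg_neg, mul_zero, zero_mul, add_zero, zero_add, neg_zero, sub_zero, zero_sub, he, hef, hfe, hff, gm_massoc he, gm_massoc hef, gm_massoc hfe, gm_massoc hff, m_l, gm_massoc m_l, m_r, gm_massoc m_r, m_lz, gm_massoc m_lz, m_rz, gm_massoc m_rz, b_l, gm_massoc b_l, b_r, gm_massoc b_r, b_lz, gm_massoc b_lz, b_rz, gm_massoc b_rz]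
      try abel
    · intro n a hu hv
      obtain ⟨n_l, n_r, n_lz, n_rz⟩ := gm_corner_facts hff he hef hef (hu)
      obtain ⟨a_l, a_r, a_lz, a_rz⟩ := gm_corner_facts he he hfe hef (hv)
      simp only [LinearMap.comp_apply, LinearMap.mulLeft_apply, LinearMap.mulRight_apply]
      rw [hD n a]
      simp only [mul_assoc, mul_add, add_mul, mul_sub, sub_mul, mul_neg, neg_mul, neg_neg, mul_zero, zero_mul, add_zero, zero_add, neg_zero, sub_zero, zero_sub, he, hef, hfe, hff, gm_massoc he, gm_massoc hef, gm_massoc hfe, gm_massoc hff, n_l, gm_massoc n_l, n_r, gm_massoc n_r, n_lz, gm_massoc n_lz, n_rz, gm_massoc n_rz, a_l, gm_massoc a_l, a_r, gm_massoc a_r, a_lz, gm_massoc a_lz, a_rz, gm_massoc a_rz]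
      try abel
    · intro b n hu hv
      obtain ⟨b_l, b_r, b_lz, b_rz⟩ := gm_corner_facts hff hff hef hfe (hu)
      obtain ⟨n_l, n_r, n_lz, n_rz⟩ := gm_corner_facts hff he hef hef (hv)
      simp only [LinearMap.comp_apply, LinearMap.mulLeft_apply, LinearMap.mulRight_apply]
      rw [hD b n]
      simp only [mul_assoc, mul_add, add_mul, mul_sub, sub_mul, mul_neg, neg_mul, neg_neg, mul_zero, zero_mul, add_zero, zero_add, neg_zero, sub_zero, zero_sub, he, hef, hfe, hff, gm_massoc he, gm_massoc hef, gm_massoc hfe, gm_massoc hff, b_l, gm_massoc b_l, b_r, gm_massoc b_r, b_lz, gm_massoc b_lz, b_rz, gm_massoc b_rz, n_l, gm_massoc n_l, n_r, gm_massoc n_r, n_lz, gm_massoc n_lz, n_rz, gm_massoc n_rz]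
      try abel
  · rintro ⟨m0, n0, hm0, hn0, δ1, τ2, ν3, μ4, hδc, hτc, hνc, hμc, hF, h1a, h1b, h2a, h2b, h3a, h3b, h4a, h4b⟩ x y
    obtain ⟨m0_l, m0_r, m0_lz, m0_rz⟩ := gm_corner_facts he hff hfe hfe (hm0)
    obtain ⟨n0_l, n0_r, n0_lz, n0_rz⟩ := gm_corner_facts hff he hef hef (hn0)
    have hDa : ∀ a : G, a = e*a*e → D a = δ1 a + a*m0 + n0*a := by
      intro a ha
      have h := hF a 0 0 0 ha (by simp) (by simp) (by simp)
      simp only [add_zero, zero_add, mul_zero, zero_mul, sub_zero, zero_sub, map_zero, neg_zero] at h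
      rw [h]; try abel
    have hDm : ∀ m : G, m = e*m*f → D m = τ2 m - m*n0 + n0*m := by
      intro m hm
      have h := hF 0 m 0 0 (by simp) hm (by simp) (by simp)
      simp only [add_zero, zero_add, mul_zero, zero_mul, sub_zero, zero_sub, map_zero, neg_zero] at h
      rw [h]; try abel
    have hDn : ∀ n : G, n = f*n*e → D n = ν3 n - m0*n + n*m0 := by
      intro n hn
      have h := hF 0 0 n 0 (by simp) (by simp) hn (by simp)
      simp only [add_zero, zero_add, mul_zero, zero_mul, sub_zero, zero_sub, map_zero, neg_zero] at h
      rw [h]; try abel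
    have hDb : ∀ b : G, b = f*b*f → D b = μ4 b - m0*b - b*n0 := by
      intro b hb
      have h := hF 0 0 0 b (by simp) (by simp) (by simp) hb
      simp only [add_zero, zero_add, mul_zero, zero_mul, sub_zero, zero_sub, map_zero, neg_zero] at h
      rw [h]; try abel
    obtain ⟨a, ha, m, hm, n, hn, b, hb, hx⟩ :
        ∃ a, a = e*a*e ∧ ∃ m, m = e*m*f ∧ ∃ n, n = f*n*e ∧ ∃ b, b = f*b*f ∧ x = a+m+n+b :=
      ⟨e*x*e, gm_corner_mul (by rw [← mul_assoc, he]) he,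
       e*x*f, gm_corner_mul (by rw [← mul_assoc, he]) hff,
       f*x*e, gm_corner_mul (by rw [← mul_assoc, hff]) he,
       f*x*f, gm_corner_mul (by rw [← mul_assoc, hff]) hff, hdecomp x⟩
    obtain ⟨c, hc, p, hp, q, hq, d, hd, hy⟩ :
        ∃ c, c = e*c*e ∧ ∃ p, p = e*p*f ∧ ∃ q, q = f*q*e ∧ ∃ d, d = f*d*f ∧ y = c+p+q+d :=
      ⟨e*y*e, gm_corner_mul (by rw [← mul_assoc, he]) he,
       e*y*f, gm_corner_mul (by rw [← mul_assoc, he]) hff,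
       f*y*e, gm_corner_mul (by rw [← mul_assoc, hff]) he,
       f*y*f, gm_corner_mul (by rw [← mul_assoc, hff]) hff, hdecomp y⟩
    obtain ⟨a_l, a_r, a_lz, a_rz⟩ := gm_corner_facts he he hfe hef (ha)
    obtain ⟨m_l, m_r, m_lz, m_rz⟩ := gm_corner_facts he hff hfe hfe (hm)
    obtain ⟨n_l, n_r, n_lz, n_rz⟩ := gm_corner_facts hff he hef hef (hn)
    obtain ⟨b_l, b_r, b_lz, b_rz⟩ := gm_corner_facts hff hff hef hfe (hb)
    obtain ⟨c_l, c_r, c_lz, c_rz⟩ := gm_corner_facts he he hfe hef (hc)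
    obtain ⟨p_l, p_r, p_lz, p_rz⟩ := gm_corner_facts he hff hfe hfe (hp)
    obtain ⟨q_l, q_r, q_lz, q_rz⟩ := gm_corner_facts hff he hef hef (hq)
    obtain ⟨d_l, d_r, d_lz, d_rz⟩ := gm_corner_facts hff hff hef hfe (hd)
    obtain ⟨da_l, da_r, da_lz, da_rz⟩ := gm_corner_facts he he hfe hef (hδc a ha)
    obtain ⟨dc_l, dc_r, dc_lz, dc_rz⟩ := gm_corner_facts he he hfe hef (hδc c hc)
    obtain ⟨tm_l, tm_r, tm_lz, tm_rz⟩ := gm_corner_facts he hff hfe hfe (hτc m hm)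
    obtain ⟨tp_l, tp_r, tp_lz, tp_rz⟩ := gm_corner_facts he hff hfe hfe (hτc p hp)
    obtain ⟨vn_l, vn_r, vn_lz, vn_rz⟩ := gm_corner_facts hff he hef hef (hνc n hn)
    obtain ⟨vq_l, vq_r, vq_lz, vq_rz⟩ := gm_corner_facts hff he hef hef (hνc q hq)
    obtain ⟨ub_l, ub_r, ub_lz, ub_rz⟩ := gm_corner_facts hff hff hef hfe (hμc b hb)
    obtain ⟨ud_l, ud_r, ud_lz, ud_rz⟩ := gm_corner_facts hff hff hef hfe (hμc d hd)
    have K1 : D (a*c) = D a*c + a*D c := by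
      rw [hDa (a*c) (gm_corner_mul a_l c_r), h1a a c ha hc, hDa a ha, hDa c hc]
      have z0 : m0*c = 0 := gm_cross_zero m0_rz c_l
      have z1 : a*n0 = 0 := gm_cross_zero a_rz n0_l
      simp only [mul_assoc, mul_add, add_mul, mul_sub, sub_mul, mul_neg, neg_mul, neg_neg, mul_zero, zero_mul, add_zero, zero_add, neg_zero, sub_zero, zero_sub, he, hef, hfe, hff, gm_massoc he, gm_massoc hef, gm_massoc hfe, gm_massoc hff, z0, gm_massoc z0, z1, gm_massoc z1]
      abel
    have K2 : D (a*p) = D a*p + a*D p := by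
      rw [hDm (a*p) (gm_corner_mul a_l p_r), h3a a p ha hp, hDa a ha, hDm p hp]
      have z0 : m0*p = 0 := gm_cross_zero m0_rz p_l
      have z1 : a*n0 = 0 := gm_cross_zero a_rz n0_l
      simp only [mul_assoc, mul_add, add_mul, mul_sub, sub_mul, mul_neg, neg_mul, neg_neg, mul_zero, zero_mul, add_zero, zero_add, neg_zero, sub_zero, zero_sub, he, hef, hfe, hff, gm_massoc he, gm_massoc hef, gm_massoc hfe, gm_massoc hff, z0, gm_massoc z0, z1, gm_massoc z1]
      abel
    have K3 : D (a*q) = D a*q + a*D q := by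
      have z0 : a*q = 0 := gm_cross_zero a_rz q_l
      rw [z0, map_zero, hDa a ha, hDn q hq]
      have w0 : δ1 a*q = 0 := gm_cross_zero da_rz q_l
      have w1 : a*ν3 q = 0 := gm_cross_zero a_rz vq_l
      simp only [mul_assoc, mul_add, add_mul, mul_sub, sub_mul, mul_neg, neg_mul, neg_neg, mul_zero, zero_mul, add_zero, zero_add, neg_zero, sub_zero, zero_sub, he, hef, hfe, hff, gm_massoc he, gm_massoc hef, gm_massoc hfe, gm_massoc hff, z0, gm_massoc z0, w0, gm_massoc w0, w1, gm_massoc w1]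
      abel
    have K4 : D (a*d) = D a*d + a*D d := by
      have z0 : a*d = 0 := gm_cross_zero a_rz d_l
      rw [z0, map_zero, hDa a ha, hDb d hd]
      have w0 : δ1 a*d = 0 := gm_cross_zero da_rz d_l
      have w1 : a*μ4 d = 0 := gm_cross_zero a_rz ud_l
      simp only [mul_assoc, mul_add, add_mul, mul_sub, sub_mul, mul_neg, neg_mul, neg_neg, mul_zero, zero_mul, add_zero, zero_add, neg_zero, sub_zero, zero_sub, he, hef, hfe, hff, gm_massoc he, gm_massoc hef, gm_massoc hfe, gm_massoc hff, z0, gm_massoc z0, w0, gm_massoc w0, w1, gm_massoc w1]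
      abel
    have K5 : D (m*c) = D m*c + m*D c := by
      have z0 : m*c = 0 := gm_cross_zero m_rz c_l
      rw [z0, map_zero, hDm m hm, hDa c hc]
      have w0 : τ2 m*c = 0 := gm_cross_zero tm_rz c_l
      have w1 : m*δ1 c = 0 := gm_cross_zero m_rz dc_l
      simp only [mul_assoc, mul_add, add_mul, mul_sub, sub_mul, mul_neg, neg_mul, neg_neg, mul_zero, zero_mul, add_zero, zero_add, neg_zero, sub_zero, zero_sub, he, hef, hfe, hff, gm_massoc he, gm_massoc hef, gm_massoc hfe, gm_massoc hff, z0, gm_massoc z0, w0, gm_massoc w0, w1, gm_massoc w1]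
      abel
    have K6 : D (m*p) = D m*p + m*D p := by
      have z0 : m*p = 0 := gm_cross_zero m_rz p_l
      rw [z0, map_zero, hDm m hm, hDm p hp]
      have w0 : τ2 m*p = 0 := gm_cross_zero tm_rz p_l
      have w1 : m*τ2 p = 0 := gm_cross_zero m_rz tp_l
      simp only [mul_assoc, mul_add, add_mul, mul_sub, sub_mul, mul_neg, neg_mul, neg_neg, mul_zero, zero_mul, add_zero, zero_add, neg_zero, sub_zero, zero_sub, he, hef, hfe, hff, gm_massoc he, gm_massoc hef, gm_massoc hfe, gm_massoc hff, z0, gm_massoc z0, w0, gm_massoc w0, w1, gm_massoc w1]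
      abel
    have K7 : D (m*q) = D m*q + m*D q := by
      rw [hDa (m*q) (gm_corner_mul m_l q_r), h1b m q hm hq, hDm m hm, hDn q hq]
      have z0 : m*m0 = 0 := gm_cross_zero m_rz m0_l
      have z1 : n0*q = 0 := gm_cross_zero n0_rz q_l
      simp only [mul_assoc, mul_add, add_mul, mul_sub, sub_mul, mul_neg, neg_mul, neg_neg, mul_zero, zero_mul, add_zero, zero_add, neg_zero, sub_zero, zero_sub, he, hef, hfe, hff, gm_massoc he, gm_massoc hef, gm_massoc hfe, gm_massoc hff, z0, gm_massoc z0, z1, gm_massoc z1]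
      abel
    have K8 : D (m*d) = D m*d + m*D d := by
      rw [hDm (m*d) (gm_corner_mul m_l d_r), h3b m d hm hd, hDm m hm, hDb d hd]
      have z0 : n0*d = 0 := gm_cross_zero n0_rz d_l
      have z1 : m*m0 = 0 := gm_cross_zero m_rz m0_l
      simp only [mul_assoc, mul_add, add_mul, mul_sub, sub_mul, mul_neg, neg_mul, neg_neg, mul_zero, zero_mul, add_zero, zero_add, neg_zero, sub_zero, zero_sub, he, hef, hfe, hff, gm_massoc he, gm_massoc hef, gm_massoc hfe, gm_massoc hff, z0, gm_massoc z0, z1, gm_massoc z1]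
      abel
    have K9 : D (n*c) = D n*c + n*D c := by
      rw [hDn (n*c) (gm_corner_mul n_l c_r), h4a n c hn hc, hDn n hn, hDa c hc]
      have z0 : m0*c = 0 := gm_cross_zero m0_rz c_l
      have z1 : n*n0 = 0 := gm_cross_zero n_rz n0_l
      simp only [mul_assoc, mul_add, add_mul, mul_sub, sub_mul, mul_neg, neg_mul, neg_neg, mul_zero, zero_mul, add_zero, zero_add, neg_zero, sub_zero, zero_sub, he, hef, hfe, hff, gm_massoc he, gm_massoc hef, gm_massoc hfe, gm_massoc hff, z0, gm_massoc z0, z1, gm_massoc z1]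
      abel
    have K10 : D (n*p) = D n*p + n*D p := by
      rw [hDb (n*p) (gm_corner_mul n_l p_r), h2b p n hp hn, hDn n hn, hDm p hp]
      have z0 : m0*p = 0 := gm_cross_zero m0_rz p_l
      have z1 : n*n0 = 0 := gm_cross_zero n_rz n0_l
      simp only [mul_assoc, mul_add, add_mul, mul_sub, sub_mul, mul_neg, neg_mul, neg_neg, mul_zero, zero_mul, add_zero, zero_add, neg_zero, sub_zero, zero_sub, he, hef, hfe, hff, gm_massoc he, gm_massoc hef, gm_massoc hfe, gm_massoc hff, z0, gm_massoc z0, z1, gm_massoc z1]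
      abel
    have K11 : D (n*q) = D n*q + n*D q := by
      have z0 : n*q = 0 := gm_cross_zero n_rz q_l
      rw [z0, map_zero, hDn n hn, hDn q hq]
      have w0 : ν3 n*q = 0 := gm_cross_zero vn_rz q_l
      have w1 : n*ν3 q = 0 := gm_cross_zero n_rz vq_l
      simp only [mul_assoc, mul_add, add_mul, mul_sub, sub_mul, mul_neg, neg_mul, neg_neg, mul_zero, zero_mul, add_zero, zero_add, neg_zero, sub_zero, zero_sub, he, hef, hfe, hff, gm_massoc he, gm_massoc hef, gm_massoc hfe, gm_massoc hff, z0, gm_massoc z0, w0, gm_massoc w0, w1, gm_massoc w1]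
      abel
    have K12 : D (n*d) = D n*d + n*D d := by
      have z0 : n*d = 0 := gm_cross_zero n_rz d_l
      rw [z0, map_zero, hDn n hn, hDb d hd]
      have w0 : ν3 n*d = 0 := gm_cross_zero vn_rz d_l
      have w1 : n*μ4 d = 0 := gm_cross_zero n_rz ud_l
      simp only [mul_assoc, mul_add, add_mul, mul_sub, sub_mul, mul_neg, neg_mul, neg_neg, mul_zero, zero_mul, add_zero, zero_add, neg_zero, sub_zero, zero_sub, he, hef, hfe, hff, gm_massoc he, gm_massoc hef, gm_massoc hfe, gm_massoc hff, z0, gm_massoc z0, w0, gm_massoc w0, w1, gm_massoc w1]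
      abel
    have K13 : D (b*c) = D b*c + b*D c := by
      have z0 : b*c = 0 := gm_cross_zero b_rz c_l
      rw [z0, map_zero, hDb b hb, hDa c hc]
      have w0 : μ4 b*c = 0 := gm_cross_zero ub_rz c_l
      have w1 : b*δ1 c = 0 := gm_cross_zero b_rz dc_l
      simp only [mul_assoc, mul_add, add_mul, mul_sub, sub_mul, mul_neg, neg_mul, neg_neg, mul_zero, zero_mul, add_zero, zero_add, neg_zero, sub_zero, zero_sub, he, hef, hfe, hff, gm_massoc he, gm_massoc hef, gm_massoc hfe, gm_massoc hff, z0, gm_massoc z0, w0, gm_massoc w0, w1, gm_massoc w1]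
      abel
    have K14 : D (b*p) = D b*p + b*D p := by
      have z0 : b*p = 0 := gm_cross_zero b_rz p_l
      rw [z0, map_zero, hDb b hb, hDm p hp]
      have w0 : μ4 b*p = 0 := gm_cross_zero ub_rz p_l
      have w1 : b*τ2 p = 0 := gm_cross_zero b_rz tp_l
      simp only [mul_assoc, mul_add, add_mul, mul_sub, sub_mul, mul_neg, neg_mul, neg_neg, mul_zero, zero_mul, add_zero, zero_add, neg_zero, sub_zero, zero_sub, he, hef, hfe, hff, gm_massoc he, gm_massoc hef, gm_massoc hfe, gm_massoc hff, z0, gm_massoc z0, w0, gm_massoc w0, w1, gm_massoc w1]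
      abel
    have K15 : D (b*q) = D b*q + b*D q := by
      rw [hDn (b*q) (gm_corner_mul b_l q_r), h4b b q hb hq, hDb b hb, hDn q hq]
      have z0 : n0*q = 0 := gm_cross_zero n0_rz q_l
      have z1 : b*m0 = 0 := gm_cross_zero b_rz m0_l
      simp only [mul_assoc, mul_add, add_mul, mul_sub, sub_mul, mul_neg, neg_mul, neg_neg, mul_zero, zero_mul, add_zero, zero_add, neg_zero, sub_zero, zero_sub, he, hef, hfe, hff, gm_massoc he, gm_massoc hef, gm_massoc hfe, gm_massoc hff, z0, gm_massoc z0, z1, gm_massoc z1]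
      abel
    have K16 : D (b*d) = D b*d + b*D d := by
      rw [hDb (b*d) (gm_corner_mul b_l d_r), h2a b d hb hd, hDb b hb, hDb d hd]
      have z0 : n0*d = 0 := gm_cross_zero n0_rz d_l
      have z1 : b*m0 = 0 := gm_cross_zero b_rz m0_l
      simp only [mul_assoc, mul_add, add_mul, mul_sub, sub_mul, mul_neg, neg_mul, neg_neg, mul_zero, zero_mul, add_zero, zero_add, neg_zero, sub_zero, zero_sub, he, hef, hfe, hff, gm_massoc he, gm_massoc hef, gm_massoc hfe, gm_massoc hff, z0, gm_massoc z0, z1, gm_massoc z1]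
      abel
    rw [hx, hy]
    simp only [mul_add, add_mul, map_add]
    rw [K1, K2, K3, K4, K5, K6, K7, K8, K9, K10, K11, K12, K13, K14, K15, K16]
    abel
end

section
/- Let 𝒩 be a nest on a complex Hilbert space H and k ≥ 1 an integer. Then Z(τ(𝒩))_k = ℂ·I: an operator W ∈ τ(𝒩) satisfies [W, X]_k = 0 for all X ∈ τ(𝒩) if and only if W is a complex scalar multiple of the identity operator. -/
/-- The nest algebra `τ(𝒩) = {T ∈ B(H) : T(N) ⊆ N for all N ∈ 𝒩}`, as a subalgebra of
the algebra `B(H) = H →L[ℂ] H` of bounded operators. -/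
def nestAlg {H : Type*} [NormedAddCommGroup H] [InnerProductSpace ℂ H]
    (𝒩 : Set (Submodule ℂ H)) : Subalgebra ℂ (H →L[ℂ] H) where
  carrier := {T | ∀ N ∈ 𝒩, ∀ x ∈ N, T x ∈ N}
  mul_mem' := by
    intro a b ha hb N hN x hx
    exact ha N hN _ (hb N hN x hx)
  add_mem' := by
    intro a b ha hb N hN x hx
    simpa using N.add_mem (ha N hN x hx) (hb N hN x hx)
  algebraMap_mem' := by
    intro c N hN x hx
    simp only [Algebra.algebraMap_eq_smul_one, ContinuousLinearMap.smul_apply,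
      ContinuousLinearMap.one_apply]
    exact N.smul_mem c hx

/-!
For an idempotent `e` one has `[[[x, e], e], e] = [x, e]`, so `[W, E]_k = 0` for an idempotent
`E ∈ τ(𝒩)` already forces `W E = E W`. For `N ∈ 𝒩`, `u ∈ N` and `v ⊥ N`, both `P_N` and
`P_N + u ⊗ v*` are idempotents of `τ(𝒩)`, so `W` commutes with `u ⊗ v*` and therefore acts on
`N` as a scalar. If the proper elements of the nest span a dense subspace, these scalars agree
along the chain and `W` is that scalar on a dense subspace. Otherwise some `v ≠ 0` is orthogonal
to every proper element; then every `u ⊗ v*` lies in `τ(𝒩)` and, normalised, is an idempotent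
whenever `⟪v, u⟫ ≠ 0`, which makes `W` a scalar on all of `H`.
-/

open InnerProductSpace

section IterComm

variable {R : Type*} [Ring R]

lemma iterComm_add (m n : ℕ) (x y : R) :
    iterComm (m + n) x y = iterComm m (iterComm n x y) y := by
  induction m with
  | zero => rw [Nat.zero_add]; rfl
  | succ m ih => rw [Nat.add_right_comm, iterComm, ih]; rfl

lemma iterComm_eq_zero_of_le {k j : ℕ} {x y : R} (h : iterComm k x y = 0) (hkj : k ≤ j) :
    iterComm j x y = 0 := by
  induction j, hkj using Nat.le_induction with
  | base => exact h
  | succ j _ ih => simp [iterComm, ih]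

lemma iterComm_eq_zero_of_commute {x y : R} (h : Commute x y) {k : ℕ} (hk : 1 ≤ k) :
    iterComm k x y = 0 :=
  iterComm_eq_zero_of_le (k := 1) (sub_eq_zero.2 h.eq) hk

lemma IsIdempotentElem.iterComm_three {e : R} (he : IsIdempotentElem e) (x : R) :
    iterComm 3 x e = iterComm 1 x e := by
  have he' : ∀ y : R, e * (e * y) = e * y := fun y => by rw [← mul_assoc, he.eq]
  simp only [iterComm, mul_sub, sub_mul, mul_assoc, he.eq, he']
  abel

lemma IsIdempotentElem.iterComm_two_mul_add_one {e : R} (he : IsIdempotentElem e) (m : ℕ)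
    (x : R) : iterComm (2 * m + 1) x e = iterComm 1 x e := by
  induction m with
  | zero => rfl
  | succ m ih =>
    rw [show 2 * (m + 1) + 1 = 3 + 2 * m by ring, iterComm_add, he.iterComm_three,
      ← iterComm_add, Nat.add_comm, ih]

lemma IsIdempotentElem.commute_of_iterComm_eq_zero_s17 {e x : R} (he : IsIdempotentElem e) {k : ℕ}
    (h : iterComm k x e = 0) : Commute x e := by
  have h₁ := iterComm_eq_zero_of_le h (Nat.le_succ_of_le (Nat.le_mul_of_pos_left k two_pos))
  rw [he.iterComm_two_mul_add_one] at h₁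
  exact sub_eq_zero.1 h₁

lemma IsIdempotentElem.add_of_mul_eq_of_mul_eq_zero {p r : R} (hp : IsIdempotentElem p)
    (hpr : p * r = r) (hrp : r * p = 0) : IsIdempotentElem (p + r) := by
  have hrr : r * r = 0 := by
    calc r * r = r * (p * r) := by rw [hpr]
      _ = 0 := by rw [← mul_assoc, hrp, zero_mul]
  simp only [IsIdempotentElem, add_mul, mul_add, hp.eq, hpr, hrp, hrr, add_zero]

end IterComm

section RankOne

variable {𝕜 E : Type*} [RCLike 𝕜] [NormedAddCommGroup E] [InnerProductSpace 𝕜 E]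

lemma isIdempotentElem_inv_smul_rankOne {u v : E} (h : inner 𝕜 v u ≠ 0) :
    IsIdempotentElem ((inner 𝕜 v u)⁻¹ • rankOne 𝕜 u v) := by
  rw [IsIdempotentElem, smul_mul_smul_comm, ContinuousLinearMap.mul_def, rankOne_comp_rankOne,
    smul_smul, mul_assoc, inv_mul_cancel₀ h, mul_one]

lemma apply_eq_smul_of_commute_rankOne {T : E →L[𝕜] E} {u v : E} (hv : v ≠ 0)
    (h : Commute T (rankOne 𝕜 u v)) : T u = (inner 𝕜 v (T v) / inner 𝕜 v v) • u := by
  have hvv : inner 𝕜 v v ≠ 0 := inner_self_ne_zero.2 hv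
  have h₁ : inner 𝕜 v v • T u = inner 𝕜 v (T v) • u := by
    simpa using congr($(h.eq) v)
  rw [div_eq_inv_mul, mul_smul, ← h₁, inv_smul_smul₀ hvv]

end RankOne

section NestAlgebra

variable {H : Type*} [NormedAddCommGroup H] [InnerProductSpace ℂ H] {𝒩 : Set (Submodule ℂ H)}

lemma rankOne_mem_nestAlg {u v : H} (h : ∀ N ∈ 𝒩, u ∈ N ∨ v ∈ Nᗮ) :
    rankOne ℂ u v ∈ nestAlg 𝒩 := by
  intro N hN x hx
  rcases h N hN with hu | hv
  · exact N.smul_mem _ hu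
  · simp [Submodule.inner_left_of_mem_orthogonal hx hv]

lemma starProjection_mem_nestAlg (hchain : ∀ N₁ ∈ 𝒩, ∀ N₂ ∈ 𝒩, N₁ ≤ N₂ ∨ N₂ ≤ N₁)
    {N : Submodule ℂ H} [N.HasOrthogonalProjection] (hN : N ∈ 𝒩) :
    N.starProjection ∈ nestAlg 𝒩 := by
  intro N' hN' x hx
  rcases hchain N hN N' hN' with h | h
  · exact h (N.starProjection_apply_mem x)
  · rwa [N.starProjection_eq_self_iff.2 (h hx)]

variable [CompleteSpace H]

lemma exists_mem_orthogonal_ne_zero {K : Submodule ℂ H} (hK : IsClosed (K : Set H))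
    (hK' : K ≠ ⊤) : ∃ v ∈ Kᗮ, v ≠ 0 := by
  have : CompleteSpace K := hK.completeSpace_coe
  exact (Submodule.ne_bot_iff _).1 fun h => hK' (Submodule.orthogonal_eq_bot_iff.1 h)

variable {W : H →L[ℂ] H}

lemma commute_rankOne_of_mem_of_mem_orthogonal
    (hchain : ∀ N₁ ∈ 𝒩, ∀ N₂ ∈ 𝒩, N₁ ≤ N₂ ∨ N₂ ≤ N₁)
    (hW : ∀ E ∈ nestAlg 𝒩, IsIdempotentElem E → Commute W E)
    {N : Submodule ℂ H} (hN : N ∈ 𝒩) (hNc : IsClosed (N : Set H))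
    {u v : H} (hu : u ∈ N) (hv : v ∈ Nᗮ) : Commute W (rankOne ℂ u v) := by
  have : CompleteSpace N := hNc.completeSpace_coe
  set P := N.starProjection
  set R := rankOne ℂ u v
  have hP : P ∈ nestAlg 𝒩 := starProjection_mem_nestAlg hchain hN
  have hR : R ∈ nestAlg 𝒩 := rankOne_mem_nestAlg fun N' hN' =>
    (hchain N hN N' hN').imp (fun h => h hu) (fun h => Submodule.orthogonal_le h hv)
  have hPR : P * R = R := by
    rw [ContinuousLinearMap.mul_def, comp_rankOne, N.starProjection_eq_self_iff.2 hu]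
  have hRP : R * P = 0 := by
    ext x
    simp [R, P, Submodule.inner_left_of_mem_orthogonal (N.starProjection_apply_mem x) hv]
  have hPR_idem := N.isIdempotentElem_starProjection.add_of_mul_eq_of_mul_eq_zero hPR hRP
  simpa using (hW _ (add_mem hP hR) hPR_idem).sub_right (hW P hP N.isIdempotentElem_starProjection)

lemma exists_forall_mem_apply_eq_smul
    (hchain : ∀ N₁ ∈ 𝒩, ∀ N₂ ∈ 𝒩, N₁ ≤ N₂ ∨ N₂ ≤ N₁)
    (hW : ∀ E ∈ nestAlg 𝒩, IsIdempotentElem E → Commute W E)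
    {N : Submodule ℂ H} (hN : N ∈ 𝒩) (hNc : IsClosed (N : Set H)) (hNtop : N ≠ ⊤) :
    ∃ c : ℂ, ∀ u ∈ N, W u = c • u := by
  obtain ⟨v, hv, hv0⟩ := exists_mem_orthogonal_ne_zero hNc hNtop
  exact ⟨_, fun u hu => apply_eq_smul_of_commute_rankOne hv0
    (commute_rankOne_of_mem_of_mem_orthogonal hchain hW hN hNc hu hv)⟩

lemma exists_eq_smul_one_of_topologicalClosure_sSup_eq_top [Nontrivial H]
    (hclosed : ∀ N ∈ 𝒩, IsClosed (N : Set H))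
    (hchain : ∀ N₁ ∈ 𝒩, ∀ N₂ ∈ 𝒩, N₁ ≤ N₂ ∨ N₂ ≤ N₁)
    (hW : ∀ E ∈ nestAlg 𝒩, IsIdempotentElem E → Commute W E)
    (hdense : (sSup {N ∈ 𝒩 | N ≠ ⊤}).topologicalClosure = ⊤) : ∃ c : ℂ, W = c • 1 := by
  obtain ⟨N₀, ⟨hN₀, hN₀top⟩, hN₀bot⟩ : ∃ N₀ ∈ {N ∈ 𝒩 | N ≠ ⊤}, N₀ ≠ ⊥ := by
    by_contra! h
    rw [sSup_eq_bot.2 h, IsClosed.submodule_topologicalClosure_eq (by simp)] at hdense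
    exact bot_ne_top hdense
  obtain ⟨u₀, hu₀, hu₀0⟩ := (Submodule.ne_bot_iff _).1 hN₀bot
  obtain ⟨c, hc⟩ := exists_forall_mem_apply_eq_smul hchain hW hN₀ (hclosed N₀ hN₀) hN₀top
  have hS : sSup {N ∈ 𝒩 | N ≠ ⊤} ≤ LinearMap.ker ((W - c • 1 : H →L[ℂ] H) : H →ₗ[ℂ] H) := by
    refine sSup_le fun N ⟨hN, hNtop⟩ u hu => ?_
    rcases hchain N hN N₀ hN₀ with h | h
    · simp [hc u (h hu)]
    · obtain ⟨c', hc'⟩ := exists_forall_mem_apply_eq_smul hchain hW hN (hclosed N hN) hNtop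
      have : c' = c := smul_left_injective ℂ hu₀0 ((hc' u₀ (h hu₀)).symm.trans (hc u₀ hu₀))
      simp [hc' u hu, this]
  have hker := Submodule.topologicalClosure_minimal _ hS (ContinuousLinearMap.isClosed_ker _)
  rw [hdense, top_le_iff] at hker
  refine ⟨c, ContinuousLinearMap.ext fun x => ?_⟩
  have hx : x ∈ LinearMap.ker ((W - c • 1 : H →L[ℂ] H) : H →ₗ[ℂ] H) := hker ▸ Submodule.mem_top
  simpa [sub_eq_zero] using hx

lemma exists_eq_smul_one_of_topologicalClosure_sSup_ne_top
    (hW : ∀ E ∈ nestAlg 𝒩, IsIdempotentElem E → Commute W E)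
    (hgap : (sSup {N ∈ 𝒩 | N ≠ ⊤}).topologicalClosure ≠ ⊤) : ∃ c : ℂ, W = c • 1 := by
  obtain ⟨v, hv, hv0⟩ :=
    exists_mem_orthogonal_ne_zero (Submodule.isClosed_topologicalClosure _) hgap
  have hmem : ∀ u, rankOne ℂ u v ∈ nestAlg 𝒩 := fun u => rankOne_mem_nestAlg fun N hN => by
    by_cases hNtop : N = ⊤
    · exact Or.inl (hNtop ▸ Submodule.mem_top)
    · have hNle : N ≤ (sSup {N ∈ 𝒩 | N ≠ ⊤}).topologicalClosure :=
        (le_sSup (s := {N ∈ 𝒩 | N ≠ ⊤}) ⟨hN, hNtop⟩).trans (Submodule.le_topologicalClosure _)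
      exact Or.inr (Submodule.orthogonal_le hNle hv)
  have hcomm : ∀ u, inner ℂ v u ≠ 0 → Commute W (rankOne ℂ u v) := fun u hu => by
    simpa [smul_smul, mul_inv_cancel₀ hu] using
      (hW _ (Subalgebra.smul_mem _ (hmem u) _) (isIdempotentElem_inv_smul_rankOne hu)).smul_right
        (inner ℂ v u)
  have hvv : inner ℂ v v ≠ 0 := inner_self_ne_zero.2 hv0
  refine ⟨inner ℂ v (W v) / inner ℂ v v, ContinuousLinearMap.ext fun u => ?_⟩
  rw [smul_apply, one_apply_eq_self]
  refine apply_eq_smul_of_commute_rankOne hv0 ?_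
  by_cases hu : inner ℂ v u = 0
  · have : rankOne ℂ u v = rankOne ℂ (u + v) v - rankOne ℂ v v := by simp
    rw [this]
    exact (hcomm _ (by simpa [inner_add_right, hu])).sub_right (hcomm v hvv)
  · exact hcomm u hu

lemma exists_eq_smul_one_of_forall_commute_isIdempotentElem
    (hclosed : ∀ N ∈ 𝒩, IsClosed (N : Set H))
    (hchain : ∀ N₁ ∈ 𝒩, ∀ N₂ ∈ 𝒩, N₁ ≤ N₂ ∨ N₂ ≤ N₁)
    (hW : ∀ E ∈ nestAlg 𝒩, IsIdempotentElem E → Commute W E) : ∃ c : ℂ, W = c • 1 := by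
  rcases subsingleton_or_nontrivial H with hH | hH
  · exact ⟨0, Subsingleton.elim _ _⟩
  by_cases hdense : (sSup {N ∈ 𝒩 | N ≠ ⊤}).topologicalClosure = ⊤
  · exact exists_eq_smul_one_of_topologicalClosure_sSup_eq_top hclosed hchain hW hdense
  · exact exists_eq_smul_one_of_topologicalClosure_sSup_ne_top hW hdense

end NestAlgebra

theorem Zk_nestAlgebra_eq_scalars_general
    {H : Type*} [NormedAddCommGroup H] [InnerProductSpace ℂ H] [CompleteSpace H]
    (𝒩 : Set (Submodule ℂ H))
    (hclosed : ∀ N ∈ 𝒩, IsClosed (N : Set H))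
    (hchain : ∀ N₁ ∈ 𝒩, ∀ N₂ ∈ 𝒩, N₁ ≤ N₂ ∨ N₂ ≤ N₁)
    (k : ℕ) (hk : 1 ≤ k)
    (W : nestAlg 𝒩) :
    (∀ X : nestAlg 𝒩, iterComm k W X = 0) ↔
    (∃ c : ℂ, W = c • (1 : nestAlg 𝒩)) := by
  refine ⟨fun hW => ?_, ?_⟩
  · have hWE : ∀ E ∈ nestAlg 𝒩, IsIdempotentElem E → Commute (W : H →L[ℂ] H) E := by
      intro E hE hEE
      have hEE' : IsIdempotentElem (⟨E, hE⟩ : nestAlg 𝒩) := Subtype.ext hEE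
      exact (hEE'.commute_of_iterComm_eq_zero_s17 (hW ⟨E, hE⟩)).map (nestAlg 𝒩).val
    obtain ⟨c, hc⟩ := exists_eq_smul_one_of_forall_commute_isIdempotentElem hclosed hchain hWE
    exact ⟨c, Subtype.ext hc⟩
  · rintro ⟨c, rfl⟩ X
    exact iterComm_eq_zero_of_commute ((Commute.one_left X).smul_left c) hk

/-- for a nest `𝒩` on a complex Hilbert space `H` and `k ≥ 1`,
`Z(τ(𝒩))_k = ℂ·I`: an operator `W ∈ τ(𝒩)` satisfies `[W, X]_k = 0` for all `X ∈ τ(𝒩)`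
if and only if `W` is a complex scalar multiple of the identity operator. -/
theorem Zk_nestAlgebra_eq_scalars
    {H : Type*} [NormedAddCommGroup H] [InnerProductSpace ℂ H] [CompleteSpace H]
    (𝒩 : Set (Submodule ℂ H))
    (hclosed : ∀ N ∈ 𝒩, IsClosed (N : Set H))
    (hbot : ⊥ ∈ 𝒩) (htop : ⊤ ∈ 𝒩)
    (hchain : ∀ N₁ ∈ 𝒩, ∀ N₂ ∈ 𝒩, N₁ ≤ N₂ ∨ N₂ ≤ N₁)
    (hinf : ∀ S ⊆ 𝒩, S.Nonempty → sInf S ∈ 𝒩)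
    (hsup : ∀ S ⊆ 𝒩, S.Nonempty → (sSup S).topologicalClosure ∈ 𝒩)
    (k : ℕ) (hk : 1 ≤ k)
    (W : nestAlg 𝒩) :
    (∀ X : nestAlg 𝒩, iterComm k W X = 0) ↔
    (∃ c : ℂ, W = c • (1 : nestAlg 𝒩)) :=
  Zk_nestAlgebra_eq_scalars_general 𝒩 hclosed hchain k hk W
end
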